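/- arXiv:2205.05247 — 5 statements merged into one kernel-verified Lean document; each statement's English description precedes it below -/
import Mathlib

section
/- Let p be a prime, and let n, j be nonnegative integers and m, N positive integers with n ≡ m (mod φ(p^N)) and m, n ≥ N, where φ is Euler's totient function. Then j! * S(n,j) ≡ j! * S(m,j) (mod p^N). -/
/-- Stirling numbers of the second kind, defined by the recursion
`S(0,0)=1`, `S(n,0)=S(0,m)=0` for `n,m ≥ 1`, `S(n+1,m+1)=S(n,m)+(m+1)*S(n,m+1)`. -/
def stirling2 : ℕ → ℕ → ℕ
  | 0, 0 => 1
  | 0, _ + 1 => 0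
  | _ + 1, 0 => 0
  | n + 1, m + 1 => stirling2 n m + (m + 1) * stirling2 n (m + 1)

/-!
The sum `∑ₗ (-1)^(l+j) * binom(j,l) * l^n` is the iterated forward difference `Δʲ(x ↦ xⁿ)(0)`.
A Leibniz rule for `Δ` applied to `x ↦ x * g x` shows that these differences satisfy the
recursion of `j! * S(n,j)`, so `j! * S(n,j) = Δʲ(x ↦ xⁿ)(0)` in every commutative ring.
In `ZMod (p^N)` the functions `x ↦ xⁿ` and `x ↦ xᵐ` coincide: on units by Euler's theorem,
since `n ≡ m [MOD φ(p^N)]`, and on non-units because they are multiples of `p`, so their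
`N`-th power already vanishes. Hence the two forward differences agree in `ZMod (p^N)`.
-/

open scoped Nat
open fwdDiff Function

section ForwardDifference

variable {R : Type*} [CommRing R]

theorem fwdDiff_iter_succ_apply (f : R → R) (k : ℕ) (y : R) :
    Δ_[1] ^[k + 1] f y = Δ_[1] ^[k] f (y + 1) - Δ_[1] ^[k] f y := by
  rw [iterate_succ_apply']
  rfl

theorem fwdDiff_iter_succ_id_mul (g : R → R) (k : ℕ) (y : R) :
    Δ_[1] ^[k + 1] (fun x ↦ x * g x) y =
      (y + (k + 1)) * Δ_[1] ^[k + 1] g y + (k + 1) * Δ_[1] ^[k] g y := by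
  induction k generalizing y with
  | zero =>
    simp only [fwdDiff_iter_succ_apply, iterate_zero, id_eq]
    push_cast
    ring
  | succ k ih =>
    rw [fwdDiff_iter_succ_apply, ih, ih, fwdDiff_iter_succ_apply g (k + 1),
      fwdDiff_iter_succ_apply g k y]
    push_cast
    ring

theorem fwdDiff_iter_pow_apply_zero (n j : ℕ) :
    Δ_[1] ^[j] (fun x : R ↦ x ^ n) 0 = ((j ! * stirling2 n j : ℕ) : R) := by
  induction n generalizing j with
  | zero =>
    cases j with
    | zero => simp [stirling2]
    | succ j =>
      rw [fwdDiff_iter_pow_eq_zero_of_lt j.succ_pos]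
      simp [stirling2]
  | succ n ih =>
    cases j with
    | zero => simp [stirling2]
    | succ j =>
      simp only [pow_succ', fwdDiff_iter_succ_id_mul, ih, stirling2, Nat.factorial_succ]
      push_cast
      ring

end ForwardDifference

namespace ZMod

variable {p N : ℕ}

theorem pow_eq_zero_of_not_isUnit (hp : p.Prime) {x : ZMod (p ^ N)} (hx : ¬IsUnit x) :
    x ^ N = 0 := by
  have : NeZero (p ^ N) := ⟨pow_ne_zero N hp.ne_zero⟩
  rw [← natCast_zmod_val x, isUnit_iff_coprime] at hx
  have hpx : p ∣ x.val := by
    by_contra h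
    exact hx (((hp.coprime_iff_not_dvd).mpr h).symm.pow_right N)
  rw [← natCast_zmod_val x, ← Nat.cast_pow, natCast_eq_zero_iff]
  exact pow_dvd_pow_of_dvd hpx N

theorem pow_eq_pow_of_modEq_totient (hp : p.Prime) {n m : ℕ}
    (hmod : n ≡ m [MOD φ (p ^ N)]) (hn : N ≤ n) (hm : N ≤ m) (x : ZMod (p ^ N)) :
    x ^ n = x ^ m := by
  by_cases hx : IsUnit x
  · rw [← hx.unit_spec, ← Units.val_pow_eq_pow_val, ← Units.val_pow_eq_pow_val,
      pow_eq_pow_of_modEq hmod (pow_totient _)]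
  · have hxN := pow_eq_zero_of_not_isUnit hp hx
    rw [pow_eq_zero_of_le hn hxN, pow_eq_zero_of_le hm hxN]

end ZMod

theorem stmt1_general (p n j m N : ℕ) (hp : p.Prime)
    (hmod : n ≡ m [MOD Nat.totient (p ^ N)]) (hn : N ≤ n) (hm' : N ≤ m) :
    (Nat.factorial j * stirling2 n j : ℤ) ≡
      (Nat.factorial j * stirling2 m j : ℤ) [ZMOD (p : ℤ) ^ N] := by
  have hpow : (fun x : ZMod (p ^ N) ↦ x ^ n) = fun x ↦ x ^ m :=
    funext (ZMod.pow_eq_pow_of_modEq_totient hp hmod hn hm')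
  have hdiff := congrArg (fun f ↦ Δ_[1] ^[j] f 0) hpow
  simp only [fwdDiff_iter_pow_apply_zero] at hdiff
  rw [← Nat.cast_pow, ← ZMod.intCast_eq_intCast_iff]
  exact_mod_cast hdiff

theorem stmt1 (p n j m N : ℕ) (hp : p.Prime) (hm : 0 < m) (hN : 0 < N)
    (hmod : n ≡ m [MOD Nat.totient (p ^ N)]) (hn : N ≤ n) (hm' : N ≤ m) :
    (Nat.factorial j * stirling2 n j : ℤ) ≡
      (Nat.factorial j * stirling2 m j : ℤ) [ZMOD (p : ℤ) ^ N] :=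
  stmt1_general p n j m N hp hmod hn hm'
end

section
/- For all nonnegative integers n and integers k, the polycosecant number satisfies the recurrence D_n^{(k-1)} = sum_{m=0}^{floor(n/2)} binom(n+1, 2m+1) * D_{n-2m}^{(k)}. -/
/-- The polycosecant numbers `D_n^{(k)}`, defined (via the explicit formula of
Kaneko–Pallewatta–Tsumura, equivalent to the generating function
`A_k(tanh(t/2))/sinh t = ∑ D_n^{(k)} tⁿ/n!`) for all integers `k`. -/
def polycosecant (n : ℕ) (k : ℤ) : ℚ :=
  ∑ i ∈ Finset.range (n / 2 + 1),
    ((2 * (i : ℚ) + 1) ^ (k + 1))⁻¹ *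
      ∑ j ∈ Finset.Icc (2 * i + 1) (n + 1),
        (-1 : ℚ) ^ (j + 1) * (Nat.factorial j : ℚ) / 2 ^ (j - 1) *
          (Nat.choose (j - 1) (2 * i) : ℚ) * (stirling2 (n + 1) j : ℚ)

namespace Stmt6Aux
open Finset

def aa (j : ℕ) : ℚ := (-1 : ℚ) ^ (j + 1) * (Nat.factorial j : ℚ) / 2 ^ (j - 1)

def hh (n r : ℕ) : ℚ :=
  ∑ j ∈ Finset.range n, aa (j + 1) * (Nat.choose j r : ℚ) * (stirling2 n (j + 1) : ℚ)

lemma stirling2_eq_zero {n j : ℕ} (h : n < j) : stirling2 n j = 0 := by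
  induction n generalizing j with
  | zero =>
    cases j with
    | zero => omega
    | succ j => rfl
  | succ n ih =>
    cases j with
    | zero => omega
    | succ j =>
      have h1 : stirling2 n j = 0 := ih (by omega)
      have h2 : stirling2 n (j + 1) = 0 := ih (by omega)
      simp [stirling2, h1, h2]

lemma aa_succ (j : ℕ) : aa (j + 2) = -((j : ℚ) + 2) / 2 * aa (j + 1) := by
  simp only [aa, Nat.factorial_succ, Nat.add_sub_cancel, pow_succ]
  push_cast
  ring

lemma choose_qid (j r : ℕ) :
    (j : ℚ) * (Nat.choose j (r + 1) : ℚ) =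
      ((r : ℚ) + 2) * (Nat.choose j (r + 2) : ℚ) + ((j : ℚ) - r) * (Nat.choose j r : ℚ) := by
  rcases lt_or_ge j (r + 1) with hj | hj
  · rcases eq_or_lt_of_le (show j ≤ r by omega) with rfl | hjr
    · simp [Nat.choose_eq_zero_of_lt (show j < j + 1 by omega),
        Nat.choose_eq_zero_of_lt (show j < j + 2 by omega)]
    · simp [Nat.choose_eq_zero_of_lt (show j < r + 1 by omega),
        Nat.choose_eq_zero_of_lt (show j < r + 2 by omega),
        Nat.choose_eq_zero_of_lt hjr]
  · have h1 := congrArg (fun x : ℕ => (x : ℚ)) (Nat.choose_succ_right_eq j (r + 1))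
    have h2 := congrArg (fun x : ℕ => (x : ℚ)) (Nat.choose_succ_right_eq j r)
    simp only [Nat.cast_mul] at h1 h2
    rw [Nat.cast_sub (by omega : r + 1 ≤ j)] at h1
    rw [Nat.cast_sub (by omega : r ≤ j)] at h2
    push_cast at h1 h2
    rw [show r + 1 + 1 = r + 2 from rfl] at h1
    linear_combination h2 - h1

end Stmt6Aux

namespace Stmt6Aux
open Finset

lemma hh_succ_expand (n r' : ℕ) :
    hh (n + 1) r' =
      (∑ j ∈ Finset.range n,
        (aa (j + 2) * (Nat.choose (j + 1) r' : ℚ) + aa (j + 1) * ((j : ℚ) + 1) * (Nat.choose j r' : ℚ))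
          * (stirling2 n (j + 1) : ℚ))
        + aa 1 * (Nat.choose 0 r' : ℚ) * (stirling2 n 0 : ℚ) := by
  unfold hh
  have e1 : ∀ j, (stirling2 (n + 1) (j + 1) : ℚ)
      = (stirling2 n j : ℚ) + ((j : ℚ) + 1) * (stirling2 n (j + 1) : ℚ) := by
    intro j
    rw [show stirling2 (n + 1) (j + 1) = stirling2 n j + (j + 1) * stirling2 n (j + 1) from rfl]
    push_cast; ring
  calc ∑ j ∈ Finset.range (n + 1), aa (j + 1) * (Nat.choose j r' : ℚ) * (stirling2 (n+1) (j+1) : ℚ)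
      = ∑ j ∈ Finset.range (n + 1),
          (aa (j + 1) * (Nat.choose j r' : ℚ) * (stirling2 n j : ℚ)
            + aa (j + 1) * (Nat.choose j r' : ℚ) * (((j : ℚ) + 1) * (stirling2 n (j + 1) : ℚ))) := by
        refine Finset.sum_congr rfl fun j _ => ?_
        rw [e1 j]; ring
    _ = (∑ j ∈ Finset.range (n + 1), aa (j + 1) * (Nat.choose j r' : ℚ) * (stirling2 n j : ℚ))
        + ∑ j ∈ Finset.range (n + 1), aa (j + 1) * (Nat.choose j r' : ℚ) * (((j : ℚ) + 1) * (stirling2 n (j + 1) : ℚ)) := by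
        rw [Finset.sum_add_distrib]
    _ = ((∑ j ∈ Finset.range n, aa (j + 2) * (Nat.choose (j + 1) r' : ℚ) * (stirling2 n (j + 1) : ℚ))
          + aa 1 * (Nat.choose 0 r' : ℚ) * (stirling2 n 0 : ℚ))
        + ((∑ j ∈ Finset.range n, aa (j + 1) * (Nat.choose j r' : ℚ) * (((j : ℚ) + 1) * (stirling2 n (j + 1) : ℚ)))
          + aa (n + 1) * (Nat.choose n r' : ℚ) * (((n : ℚ) + 1) * (stirling2 n (n + 1) : ℚ))) := by
        rw [Finset.sum_range_succ' _ n, Finset.sum_range_succ]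
    _ = _ := by
        rw [stirling2_eq_zero (show n < n + 1 by omega)]
        push_cast
        rw [mul_zero, mul_zero, add_zero, add_right_comm, ← Finset.sum_add_distrib]
        refine congrArg₂ _ (Finset.sum_congr rfl fun j _ => by ring) (by norm_num)

lemma hh_C1 (n r : ℕ) :
    hh (n + 1) (r + 1) = ((r : ℚ) + 2) / 2 * (hh n (r + 2) - hh n r) := by
  rw [hh_succ_expand]
  have hb : ∀ j : ℕ,
      aa (j + 2) * (Nat.choose (j + 1) (r + 1) : ℚ) + aa (j + 1) * ((j : ℚ) + 1) * (Nat.choose j (r + 1) : ℚ)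
        = ((r : ℚ) + 2) / 2 * (aa (j + 1) * ((Nat.choose j (r + 2) : ℚ) - (Nat.choose j r : ℚ))) := by
    intro j
    have hp := congrArg (fun x : ℕ => (x : ℚ)) (Nat.choose_succ_succ (j) (r))
    push_cast at hp
    rw [aa_succ]
    linear_combination (aa (j + 1) / 2) * choose_qid j r + (-((j : ℚ) + 2) / 2 * aa (j + 1)) * hp
  simp only [Nat.choose_eq_zero_of_lt (show 0 < r + 1 by omega)]
  rw [Finset.sum_congr rfl fun j _ => by rw [hb j]]
  unfold hh
  simp only [Nat.cast_zero, mul_zero, zero_mul, add_zero]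
  rw [← Finset.sum_sub_distrib, Finset.mul_sum]
  exact Finset.sum_congr rfl fun j _ => by ring

end Stmt6Aux

namespace Stmt6Aux
open Finset

lemma hh_C2 (n : ℕ) :
    hh (n + 1) 0 = 1 / 2 * hh n 1 + (if n = 0 then (1 : ℚ) else 0) := by
  rw [hh_succ_expand]
  have hb : ∀ j : ℕ,
      aa (j + 2) * (Nat.choose (j + 1) 0 : ℚ) + aa (j + 1) * ((j : ℚ) + 1) * (Nat.choose j 0 : ℚ)
        = 1 / 2 * (aa (j + 1) * (Nat.choose j 1 : ℚ)) := by
    intro j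
    rw [aa_succ]
    simp [Nat.choose_one_right]
    ring
  rw [Finset.sum_congr rfl fun j _ => by rw [hb j]]
  have hs : (stirling2 n 0 : ℚ) = if n = 0 then (1 : ℚ) else 0 := by
    cases n with
    | zero => norm_num [stirling2]
    | succ m => norm_num [stirling2]
  have ha1 : aa 1 = 1 := by norm_num [aa, Nat.factorial]
  rw [hs, ha1]
  unfold hh
  rw [Finset.mul_sum]
  simp only [Nat.choose_one_right, mul_one]
  refine congrArg₂ _ (Finset.sum_congr rfl fun j _ => by ring) (by norm_num)

def gg : ℕ → ℕ → ℚ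
  | n, 0 => if n = 0 then -2 else 0
  | n, r + 1 => hh n r

@[simp] lemma gg_succ_def (n r : ℕ) : gg n (r + 1) = hh n r := rfl
@[simp] lemma gg_zero_def (n : ℕ) : gg n 0 = if n = 0 then -2 else 0 := rfl

lemma gg_zero (r : ℕ) : gg 0 (r + 1) = 0 := by
  simp [gg, hh]

lemma gg_succ_zero (n : ℕ) : gg (n + 1) 0 = 0 := by simp

lemma gg_rec (n r : ℕ) : gg (n + 1) (r + 1) = ((r : ℚ) + 1) / 2 * (gg n (r + 2) - gg n r) := by
  cases r with
  | zero =>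
    simp only [gg_succ_def, gg_zero_def]
    rw [hh_C2]
    rcases n with _ | m <;> norm_num <;> ring
  | succ s =>
    simp only [gg_succ_def]
    rw [hh_C1]
    push_cast
    ring

end Stmt6Aux

namespace Stmt6Aux
open Finset

def cv (c : ℕ → ℚ) (N r : ℕ) : ℚ :=
  ∑ l ∈ Finset.range (N + 1), c l * (Nat.choose N l : ℚ) * gg (N - l) r

def cv' (c : ℕ → ℚ) (N r : ℕ) : ℚ :=
  ∑ l ∈ Finset.range (N + 1), c l * (Nat.choose N l : ℚ) * gg (N + 1 - l) r

lemma cv_pascal (c : ℕ → ℚ) (N r : ℕ) :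
    cv c (N + 1) r = cv (fun l => c (l + 1)) N r + cv' c N r := by
  unfold cv cv'
  rw [Finset.sum_range_succ' _ (N + 1)]
  have e1 : ∀ l, (Nat.choose (N + 1) (l + 1) : ℚ) = (Nat.choose N l : ℚ) + (Nat.choose N (l + 1) : ℚ) := by
    intro l; rw [Nat.choose_succ_succ]; push_cast; ring
  calc (∑ l ∈ Finset.range (N + 1), c (l + 1) * (Nat.choose (N + 1) (l + 1) : ℚ) * gg (N + 1 - (l + 1)) r)
        + c 0 * (Nat.choose (N + 1) 0 : ℚ) * gg (N + 1 - 0) r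
      = (∑ l ∈ Finset.range (N + 1),
          (c (l + 1) * (Nat.choose N l : ℚ) * gg (N - l) r
            + c (l + 1) * (Nat.choose N (l + 1) : ℚ) * gg (N - l) r))
        + c 0 * (Nat.choose N 0 : ℚ) * gg (N + 1 - 0) r := by
        refine congrArg₂ _ (Finset.sum_congr rfl fun l _ => ?_) (by norm_num)
        rw [e1 l, show N + 1 - (l + 1) = N - l from by omega]
        ring
    _ = (∑ l ∈ Finset.range (N + 1), c (l + 1) * (Nat.choose N l : ℚ) * gg (N - l) r)
        + ((∑ l ∈ Finset.range (N + 1), c (l + 1) * (Nat.choose N (l + 1) : ℚ) * gg (N - l) r)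
          + c 0 * (Nat.choose N 0 : ℚ) * gg (N + 1 - 0) r) := by
        rw [Finset.sum_add_distrib]; ring
    _ = _ := by
        refine congrArg₂ _ rfl ?_
        rw [Finset.sum_range_succ' (fun l => c l * (Nat.choose N l : ℚ) * gg (N + 1 - l) r) N,
          Finset.sum_range_succ (fun l => c (l + 1) * (Nat.choose N (l + 1) : ℚ) * gg (N - l) r) N,
          Nat.choose_succ_self]
        simp only [Nat.cast_zero, mul_zero, zero_mul, add_zero]
        refine congrArg₂ _ (Finset.sum_congr rfl fun l hl => ?_) rfl
        rw [show N + 1 - (l + 1) = N - l from by omega]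

lemma cv'_succ (c : ℕ → ℚ) (N s : ℕ) :
    cv' c N (s + 1) = ((s : ℚ) + 1) / 2 * (cv c N (s + 2) - cv c N s) := by
  unfold cv cv'
  rw [← Finset.sum_sub_distrib, Finset.mul_sum]
  refine Finset.sum_congr rfl fun l hl => ?_
  have hlN : l ≤ N := Nat.lt_succ_iff.mp (Finset.mem_range.mp hl)
  rw [show N + 1 - l = (N - l) + 1 from by omega, gg_rec]
  ring

lemma cv'_zero (c : ℕ → ℚ) (N : ℕ) : cv' c N 0 = 0 := by
  unfold cv'
  refine Finset.sum_eq_zero fun l hl => ?_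
  have hlN : l ≤ N := Nat.lt_succ_iff.mp (Finset.mem_range.mp hl)
  rw [show N + 1 - l = (N - l) + 1 from by omega, gg_succ_zero, mul_zero]

def so (l : ℕ) : ℚ := if l % 2 = 1 then 1 else 0
def se (l : ℕ) : ℚ := if l % 2 = 1 then 0 else 1

lemma so_succ : (fun l => so (l + 1)) = se := by
  funext l
  have h := Nat.mod_two_eq_zero_or_one l
  rcases h with h | h <;> simp [so, se, Nat.add_mod, h]

lemma se_succ : (fun l => se (l + 1)) = so := by
  funext l
  have h := Nat.mod_two_eq_zero_or_one l
  rcases h with h | h <;> simp [so, se, Nat.add_mod, h]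

lemma cv_base (c : ℕ → ℚ) (r : ℕ) : cv c 0 r = c 0 * gg 0 r := by
  simp [cv]

lemma JJ (N : ℕ) : ∀ r : ℕ,
    (cv so N r - cv so N (r + 2) = -2 * gg N (r + 1)) ∧
    (cv se N r - cv se N (r + 2) = gg N r + gg N (r + 2)) := by
  induction N with
  | zero =>
    intro r
    constructor
    · simp [cv_base, so, hh]
    · simp [cv_base, se, hh]
  | succ N ih =>
    intro r
    constructor
    · rw [cv_pascal, cv_pascal, so_succ]
      cases r with
      | zero =>
        simp only [Nat.zero_add]
        rw [cv'_zero]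
        have e2 : cv' so N 2 = ((1 : ℚ) + 1) / 2 * (cv so N 3 - cv so N 1) := cv'_succ so N 1
        have e3 : gg (N + 1) 1 = ((0 : ℚ) + 1) / 2 * (gg N 2 - gg N 0) := gg_rec N 0
        rw [e2, e3]
        have j1 := (ih 1).1
        have j2 := (ih 0).2
        norm_num at j1 j2 ⊢
        linear_combination j2 + j1
      | succ s =>
        have e1 : cv' so N (s + 1) = ((s : ℚ) + 1) / 2 * (cv so N (s + 2) - cv so N s) := cv'_succ so N s
        have e2 : cv' so N (s + 1 + 2) = ((s : ℚ) + 3) / 2 * (cv so N (s + 4) - cv so N (s + 2)) := by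
          have h := cv'_succ so N (s + 2)
          rw [show s + 2 + 1 = s + 1 + 2 from by omega, show s + 2 + 2 = s + 4 from by omega] at h
          rw [h]; push_cast; ring
        have e3 : gg (N + 1) (s + 1 + 1) = ((s : ℚ) + 2) / 2 * (gg N (s + 3) - gg N (s + 1)) := by
          have h := gg_rec N (s + 1)
          rw [show s + 1 + 2 = s + 3 from by omega] at h
          rw [show s + 1 + 1 = s + 1 + 1 from rfl, h]; push_cast; ring
        rw [e1, e2, e3]
        have j2 := (ih (s + 1)).2
        have j1a := (ih s).1
        have j1b := (ih (s + 2)).1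
        rw [show s + 1 + 2 = s + 3 from by omega] at j2
        rw [show s + 2 + 2 = s + 4 from by omega, show s + 2 + 1 = s + 3 from by omega] at j1b
        rw [show s + 1 + 2 = s + 3 from by omega]
        linear_combination j2 + (-((s : ℚ) + 1) / 2) * j1a + (((s : ℚ) + 3) / 2) * j1b
    · rw [cv_pascal, cv_pascal, se_succ]
      cases r with
      | zero =>
        simp only [Nat.zero_add]
        rw [cv'_zero, gg_succ_zero]
        have e2 : cv' se N 2 = ((1 : ℚ) + 1) / 2 * (cv se N 3 - cv se N 1) := cv'_succ se N 1
        have e3 : gg (N + 1) 2 = ((1 : ℚ) + 1) / 2 * (gg N 3 - gg N 1) := gg_rec N 1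
        rw [e2, e3]
        have j1 := (ih 0).1
        have j2 := (ih 1).2
        norm_num at j1 j2 ⊢
        linear_combination j1 + j2
      | succ s =>
        have e1 : cv' se N (s + 1) = ((s : ℚ) + 1) / 2 * (cv se N (s + 2) - cv se N s) := cv'_succ se N s
        have e2 : cv' se N (s + 1 + 2) = ((s : ℚ) + 3) / 2 * (cv se N (s + 4) - cv se N (s + 2)) := by
          have h := cv'_succ se N (s + 2)
          rw [show s + 2 + 1 = s + 1 + 2 from by omega, show s + 2 + 2 = s + 4 from by omega] at h
          rw [h]; push_cast; ring
        have e3 : gg (N + 1) (s + 1) = ((s : ℚ) + 1) / 2 * (gg N (s + 2) - gg N s) := gg_rec N s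
        have e4 : gg (N + 1) (s + 1 + 2) = ((s : ℚ) + 3) / 2 * (gg N (s + 4) - gg N (s + 2)) := by
          have h := gg_rec N (s + 2)
          rw [show s + 2 + 1 = s + 1 + 2 from by omega, show s + 2 + 2 = s + 4 from by omega] at h
          rw [h]; push_cast; ring
        rw [e1, e2, e3, e4]
        have j1 := (ih (s + 1)).1
        have j2a := (ih s).2
        have j2b := (ih (s + 2)).2
        rw [show s + 1 + 2 = s + 3 from by omega, show s + 1 + 1 = s + 2 from by omega] at j1
        rw [show s + 2 + 2 = s + 4 from by omega] at j2b
        linear_combination j1 + (-((s : ℚ) + 1) / 2) * j2a + (((s : ℚ) + 3) / 2) * j2b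

lemma key (N r : ℕ) : ((r : ℚ) + 1) * gg N (r + 1) = cv' so N (r + 1) := by
  rw [cv'_succ]
  have h := (JJ N r).1
  linear_combination (((r : ℚ) + 1) / 2) * h

end Stmt6Aux

namespace Stmt6Aux
open Finset

lemma hh_vanish {M r : ℕ} (h : M ≤ r) : hh M r = 0 := by
  unfold hh
  refine Finset.sum_eq_zero fun j hj => ?_
  have hjM : j < M := Finset.mem_range.mp hj
  rw [Nat.choose_eq_zero_of_lt (by omega)]
  norm_num

lemma key2 (n i : ℕ) :
    (2 * (i : ℚ) + 1) * hh (n + 1) (2 * i) =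
      ∑ m ∈ Finset.range (n / 2 + 1), (Nat.choose (n + 1) (2 * m + 1) : ℚ) * hh (n - 2 * m + 1) (2 * i) := by
  have hk := key (n + 1) (2 * i)
  have hcast : ((2 * i : ℕ) : ℚ) + 1 = 2 * (i : ℚ) + 1 := by push_cast; ring
  rw [hcast] at hk
  rw [gg_succ_def] at hk
  rw [hk]
  unfold cv'
  have hterm : ∀ l ∈ Finset.range (n + 2),
      so l * (Nat.choose (n + 1) l : ℚ) * gg (n + 1 + 1 - l) (2 * i + 1)
        = if l % 2 = 1 then (Nat.choose (n + 1) l : ℚ) * hh (n + 2 - l) (2 * i) else 0 := by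
    intro l hl
    by_cases h : l % 2 = 1 <;> simp [so, h, show n + 1 + 1 - l = n + 2 - l from by omega]
  rw [Finset.sum_congr rfl hterm, ← Finset.sum_filter]
  refine Finset.sum_bij' (fun l _ => l / 2) (fun m _ => 2 * m + 1) ?_ ?_ ?_ ?_ ?_
  · intro l hl
    simp only [Finset.mem_filter, Finset.mem_range] at hl
    simp only [Finset.mem_range]
    omega
  · intro m hm
    simp only [Finset.mem_range] at hm
    simp only [Finset.mem_filter, Finset.mem_range]
    omega
  · intro l hl
    simp only [Finset.mem_filter, Finset.mem_range] at hl
    omega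
  · intro m hm
    omega
  · intro l hl
    simp only [Finset.mem_filter, Finset.mem_range] at hl
    have e1 : 2 * (l / 2) + 1 = l := by omega
    have e2 : n - 2 * (l / 2) + 1 = n + 2 - l := by omega
    rw [e1, e2]

lemma inner_eq (n i : ℕ) :
    (∑ j ∈ Finset.Icc (2 * i + 1) (n + 1),
        (-1 : ℚ) ^ (j + 1) * (Nat.factorial j : ℚ) / 2 ^ (j - 1) *
          (Nat.choose (j - 1) (2 * i) : ℚ) * (stirling2 (n + 1) j : ℚ))
      = hh (n + 1) (2 * i) := by
  rw [show Finset.Icc (2 * i + 1) (n + 1) = Finset.filter (fun j => 2 * i + 1 ≤ j) (Finset.Icc 1 (n + 1)) from ?_]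
  · rw [Finset.sum_filter]
    have hterm : ∀ j ∈ Finset.Icc 1 (n + 1),
        (if 2 * i + 1 ≤ j then (-1 : ℚ) ^ (j + 1) * (Nat.factorial j : ℚ) / 2 ^ (j - 1) *
          (Nat.choose (j - 1) (2 * i) : ℚ) * (stirling2 (n + 1) j : ℚ) else 0)
          = (-1 : ℚ) ^ (j + 1) * (Nat.factorial j : ℚ) / 2 ^ (j - 1) *
          (Nat.choose (j - 1) (2 * i) : ℚ) * (stirling2 (n + 1) j : ℚ) := by
      intro j hj
      simp only [Finset.mem_Icc] at hj
      by_cases h : 2 * i + 1 ≤ j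
      · rw [if_pos h]
      · rw [if_neg h, Nat.choose_eq_zero_of_lt (by omega)]
        norm_num
    rw [Finset.sum_congr rfl hterm]
    unfold hh
    refine Finset.sum_bij' (fun j _ => j - 1) (fun j _ => j + 1) ?_ ?_ ?_ ?_ ?_
    · intro j hj
      simp only [Finset.mem_Icc] at hj
      simp only [Finset.mem_range]
      omega
    · intro j hj
      simp only [Finset.mem_range] at hj
      simp only [Finset.mem_Icc]
      omega
    · intro j hj
      simp only [Finset.mem_Icc] at hj
      omega
    · intro j hj
      omega
    · intro j hj
      simp only [Finset.mem_Icc] at hj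
      obtain ⟨j, rfl⟩ : ∃ j', j = j' + 1 := ⟨j - 1, by omega⟩
      simp only [Nat.add_sub_cancel, aa]
  · ext j
    simp only [Finset.mem_Icc, Finset.mem_filter]
    omega

lemma poly_rw (n : ℕ) (k : ℤ) :
    polycosecant n k =
      ∑ i ∈ Finset.range (n / 2 + 1), ((2 * (i : ℚ) + 1) ^ (k + 1))⁻¹ * hh (n + 1) (2 * i) := by
  unfold polycosecant
  exact Finset.sum_congr rfl fun i _ => by rw [inner_eq]

end Stmt6Aux

theorem stmt6 (n : ℕ) (k : ℤ) :
    polycosecant n (k - 1) =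
      ∑ m ∈ Finset.range (n / 2 + 1),
        (Nat.choose (n + 1) (2 * m + 1) : ℚ) * polycosecant (n - 2 * m) k := by
  open Stmt6Aux in
  have hmrw : ∀ m ∈ Finset.range (n / 2 + 1),
      (Nat.choose (n + 1) (2 * m + 1) : ℚ) * polycosecant (n - 2 * m) k
        = ∑ i ∈ Finset.range (n / 2 + 1),
            (Nat.choose (n + 1) (2 * m + 1) : ℚ)
              * (((2 * (i : ℚ) + 1) ^ (k + 1))⁻¹ * hh (n - 2 * m + 1) (2 * i)) := by
    intro m hm
    simp only [Finset.mem_range] at hm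
    rw [poly_rw]
    rw [Finset.mul_sum]
    refine Finset.sum_subset (Finset.range_subset_range.mpr (by omega)) ?_
    intro i hi hni
    simp only [Finset.mem_range] at hi hni
    rw [hh_vanish (by omega)]
    norm_num
  rw [Finset.sum_congr rfl hmrw, Finset.sum_comm, poly_rw]
  refine Finset.sum_congr rfl fun i hi => ?_
  have hx : (2 * (i : ℚ) + 1) ≠ 0 := by positivity
  have hzp : ((2 * (i : ℚ) + 1) ^ (k - 1 + 1))⁻¹ = ((2 * (i : ℚ) + 1) ^ (k + 1))⁻¹ * (2 * (i : ℚ) + 1) := by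
    rw [show k - 1 + 1 = k from by ring, zpow_add_one₀ hx, mul_inv, inv_mul_cancel_right₀ hx]
  rw [hzp]
  have hr : ∀ m ∈ Finset.range (n / 2 + 1),
      (Nat.choose (n + 1) (2 * m + 1) : ℚ)
          * (((2 * (i : ℚ) + 1) ^ (k + 1))⁻¹ * hh (n - 2 * m + 1) (2 * i))
        = ((2 * (i : ℚ) + 1) ^ (k + 1))⁻¹
            * ((Nat.choose (n + 1) (2 * m + 1) : ℚ) * hh (n - 2 * m + 1) (2 * i)) := by
    intro m _; ring
  rw [Finset.sum_congr rfl hr, ← Finset.mul_sum, mul_assoc]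
  exact congrArg _ (key2 n i)
end

section
/- Let p be an odd prime. For positive integers n, m, k, N with 2m ≡ 2n (mod φ(p^N)) and 2n, 2m ≥ N, the polycosecant numbers satisfy D_{2m}^{(-k)} ≡ D_{2n}^{(-k)} (mod p^N). -/
/-- The polycosecant numbers with nonpositive upper index:
`Dneg n k = D_{2n}^{(-k)} = ∑_{i=1}^{min(2n+1,k)} (i!(i-1)!/2^{i-1}) S(k,i) S(2n+1,i)`. -/
def Dneg (n k : ℕ) : ℚ :=
  ∑ i ∈ Finset.Icc 1 (min (2 * n + 1) k),
    (Nat.factorial i * Nat.factorial (i - 1) : ℚ) / 2 ^ (i - 1) *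
      (stirling2 k i : ℚ) * (stirling2 (2 * n + 1) i : ℚ)

lemma stirling2_eq_zero : ∀ {n i : ℕ}, n < i → stirling2 n i = 0 := by
  intro n
  induction n with
  | zero => intro i h; match i, h with | j+1, _ => rfl
  | succ n ih =>
    intro i h
    match i, h with
    | j+1, h =>
      show stirling2 n j + (j + 1) * stirling2 n (j + 1) = 0
      rw [ih (by omega), ih (by omega)]
      simp

def Efac : ℕ → ℕ
  | 0 => 1
  | j + 1 => Efac j * ((j + 2).choose 2)

lemma Efac_mul_two_pow (j : ℕ) : Efac j * 2 ^ j = (j + 1).factorial * j.factorial := by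
  induction j with
  | zero => rfl
  | succ j ih =>
    have h2 : (j + 2).choose 2 * 2 = (j + 2) * (j + 1) := by
      rw [Nat.choose_two_right]
      have hsub : j + 2 - 1 = j + 1 := by omega
      have he : 2 ∣ (j + 2) * (j + 2 - 1) := by
        rw [hsub, mul_comm]
        exact (Nat.even_mul_succ_self (j + 1)).two_dvd
      rw [Nat.div_mul_cancel he, hsub]
    show Efac j * ((j + 2).choose 2) * 2 ^ (j + 1) = _
    rw [pow_succ]
    calc Efac j * ((j + 2).choose 2) * (2 ^ j * 2)
        = (Efac j * 2 ^ j) * ((j + 2).choose 2 * 2) := by ring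
      _ = ((j + 1).factorial * j.factorial) * ((j + 2) * (j + 1)) := by rw [ih, h2]
      _ = (j + 2).factorial * (j + 1).factorial := by
          rw [Nat.factorial_succ (j + 1), Nat.factorial_succ j]; ring

lemma sum_shift_G (n i : ℕ) :
    ∑ j ∈ Finset.range (i + 2), (-1 : ℤ) ^ (i + 1 + j) * ((i + 1).choose j) * (j : ℤ) ^ (n + 1)
      = (i + 1) * ∑ l ∈ Finset.range (i + 1),
          (-1 : ℤ) ^ (i + l) * (i.choose l) * ((l : ℤ) + 1) ^ n := by
  rw [Finset.sum_range_succ' (fun j => (-1 : ℤ) ^ (i + 1 + j) * ((i + 1).choose j) * (j : ℤ) ^ (n + 1)) (i + 1)]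
  rw [Finset.mul_sum]
  have h0 : (-1 : ℤ) ^ (i + 1 + 0) * ((i + 1).choose 0) * ((0 : ℕ) : ℤ) ^ (n + 1) = 0 := by
    simp
  rw [h0, add_zero]
  refine Finset.sum_congr rfl fun l _ => ?_
  have hc : ((i + 1).choose (l + 1) : ℤ) * (l + 1) = (i + 1) * (i.choose l) := by
    exact_mod_cast (Nat.add_one_mul_choose_eq i l).symm
  have he : i + 1 + (l + 1) = (i + l) + 2 := by omega
  rw [he, pow_add, pow_succ]
  push_cast
  linear_combination ((-1 : ℤ) ^ (i + l) * ((l : ℤ) + 1) ^ n) * hc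

lemma G_eq (n i : ℕ) :
    ∑ l ∈ Finset.range (i + 1), (-1 : ℤ) ^ (i + l) * (i.choose l) * ((l : ℤ) + 1) ^ n
      = (∑ j ∈ Finset.range (i + 1), (-1 : ℤ) ^ (i + j) * (i.choose j) * (j : ℤ) ^ n)
      + ∑ j ∈ Finset.range (i + 2), (-1 : ℤ) ^ (i + 1 + j) * ((i + 1).choose j) * (j : ℤ) ^ n := by
  have hS1 : ∑ j ∈ Finset.range (i + 2), (-1 : ℤ) ^ (i + 1 + j) * ((i + 1).choose j) * (j : ℤ) ^ n
      = (∑ l ∈ Finset.range (i + 1), (-1 : ℤ) ^ (i + l) * (((i.choose l : ℤ)) + (i.choose (l + 1))) * ((l : ℤ) + 1) ^ n)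
        + (-1) ^ (i + 1) * (0 : ℤ) ^ n := by
    rw [Finset.sum_range_succ' (fun j => (-1 : ℤ) ^ (i + 1 + j) * ((i + 1).choose j) * (j : ℤ) ^ n) (i + 1)]
    congr 1
    · refine Finset.sum_congr rfl fun l _ => ?_
      have he : i + 1 + (l + 1) = (i + l) + 2 := by omega
      rw [he, pow_add, Nat.choose_succ_succ]
      push_cast
      ring
    · simp
  rw [hS1]
  have hsplit : ∑ l ∈ Finset.range (i + 1),
      (-1 : ℤ) ^ (i + l) * (((i.choose l : ℤ)) + (i.choose (l + 1))) * ((l : ℤ) + 1) ^ n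
      = (∑ l ∈ Finset.range (i + 1), (-1 : ℤ) ^ (i + l) * (i.choose l) * ((l : ℤ) + 1) ^ n)
      + ∑ l ∈ Finset.range (i + 1), (-1 : ℤ) ^ (i + l) * (i.choose (l + 1)) * ((l : ℤ) + 1) ^ n := by
    rw [← Finset.sum_add_distrib]
    refine Finset.sum_congr rfl fun l _ => by ring
  rw [hsplit]
  -- the extra sum: last term vanishes
  have hextra : ∑ l ∈ Finset.range (i + 1), (-1 : ℤ) ^ (i + l) * (i.choose (l + 1)) * ((l : ℤ) + 1) ^ n
      = ∑ l ∈ Finset.range i, (-1 : ℤ) ^ (i + l) * (i.choose (l + 1)) * ((l : ℤ) + 1) ^ n := by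
    rw [Finset.sum_range_succ]
    simp [Nat.choose_succ_self]
  have hF : ∑ j ∈ Finset.range (i + 1), (-1 : ℤ) ^ (i + j) * (i.choose j) * (j : ℤ) ^ n
      = (∑ l ∈ Finset.range i, (-1 : ℤ) ^ (i + (l + 1)) * (i.choose (l + 1)) * (((l : ℤ)) + 1) ^ n)
        + (-1) ^ i * (0 : ℤ) ^ n := by
    rw [Finset.sum_range_succ' (fun j => (-1 : ℤ) ^ (i + j) * (i.choose j) * (j : ℤ) ^ n) i]
    refine congrArg₂ (· + ·) (Finset.sum_congr rfl fun l _ => by push_cast; ring) (by simp)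
  have hsign : ∀ l, (-1 : ℤ) ^ (i + (l + 1)) = -(-1 : ℤ) ^ (i + l) := by
    intro l
    rw [show i + (l + 1) = (i + l) + 1 by omega, pow_succ]
    ring
  have hF' : ∑ j ∈ Finset.range (i + 1), (-1 : ℤ) ^ (i + j) * (i.choose j) * (j : ℤ) ^ n
      = -(∑ l ∈ Finset.range i, (-1 : ℤ) ^ (i + l) * (i.choose (l + 1)) * (((l : ℤ)) + 1) ^ n)
        + (-1) ^ i * (0 : ℤ) ^ n := by
    rw [hF, ← Finset.sum_neg_distrib]
    congr 1
    exact Finset.sum_congr rfl fun l _ => by rw [hsign l]; ring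
  rw [hextra, hF']
  have : (-1 : ℤ) ^ (i + 1) * (0 : ℤ) ^ n = -((-1) ^ i * (0 : ℤ) ^ n) := by
    rw [pow_succ]; ring
  rw [this]
  ring

lemma stirling2_formula (n i : ℕ) :
    (i.factorial : ℤ) * stirling2 n i =
      ∑ j ∈ Finset.range (i + 1), (-1 : ℤ) ^ (i + j) * (i.choose j) * (j : ℤ) ^ n := by
  induction n generalizing i with
  | zero =>
    match i with
    | 0 => simp [stirling2]
    | s + 1 =>
      rw [show stirling2 0 (s + 1) = 0 from rfl]
      have : ∑ j ∈ Finset.range (s + 2), (-1 : ℤ) ^ (s + 1 + j) * ((s + 1).choose j) * (j : ℤ) ^ 0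
          = (-1 : ℤ) ^ (s + 1) * ∑ j ∈ Finset.range (s + 2), (-1 : ℤ) ^ j * ((s + 1).choose j) := by
        rw [Finset.mul_sum]
        exact Finset.sum_congr rfl fun j _ => by rw [pow_add]; ring
      rw [this, Int.alternating_sum_range_choose]
      simp
  | succ n ih =>
    match i with
    | 0 => simp [stirling2]
    | s + 1 =>
      rw [show stirling2 (n + 1) (s + 1) = stirling2 n s + (s + 1) * stirling2 n (s + 1) from rfl]
      rw [sum_shift_G n s, G_eq n s, ← ih s, ← ih (s + 1)]
      rw [Nat.factorial_succ s]
      push_cast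
      ring

def Acs (n k : ℕ) : ℕ :=
  ∑ i ∈ Finset.Icc 1 k, Efac (i - 1) * stirling2 k i * stirling2 (2 * n + 1) i

lemma Dneg_eq (n k : ℕ) : Dneg n k = (Acs n k : ℚ) := by
  unfold Dneg Acs
  push_cast
  rw [Finset.sum_subset (Finset.Icc_subset_Icc_right (min_le_right (2 * n + 1) k))
    (fun i hi hni => ?_)]
  · refine Finset.sum_congr rfl fun i hi => ?_
    rw [Finset.mem_Icc] at hi
    obtain ⟨j, rfl⟩ : ∃ j, i = j + 1 := ⟨i - 1, by omega⟩
    have hE : (Efac j : ℚ) * 2 ^ j = ((j + 1).factorial : ℚ) * j.factorial := by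
      exact_mod_cast congrArg (Nat.cast : ℕ → ℚ) (Efac_mul_two_pow j)
    have h2 : (2 : ℚ) ^ j ≠ 0 := by positivity
    simp only [Nat.add_sub_cancel]
    field_simp
    linear_combination (-1 * (stirling2 k (j+1) : ℚ) * (stirling2 (2*n+1) (j+1) : ℚ)) * hE
  · rw [Finset.mem_Icc] at hi
    rw [Finset.mem_Icc] at hni
    have h1 : 2 * n + 1 < i := by omega
    rw [stirling2_eq_zero h1]
    push_cast
    ring

theorem stmt9 (p n m k N : ℕ) (hp : p.Prime) (hodd : Odd p)
    (hn : 0 < n) (hm : 0 < m) (hk : 0 < k) (hN : 0 < N)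
    (hmod : 2 * m ≡ 2 * n [MOD Nat.totient (p ^ N)])
    (h2n : N ≤ 2 * n) (h2m : N ≤ 2 * m) :
    ∃ c : ℤ, Dneg m k - Dneg n k = (p : ℚ) ^ N * c := by
  set q := p ^ N with hq
  haveI : NeZero q := ⟨pow_ne_zero N hp.pos.ne'⟩
  -- 2 is a unit mod q
  have h2unit : IsUnit (2 : ZMod q) := by
    have : IsUnit ((2 : ℕ) : ZMod q) := by
      rw [ZMod.isUnit_iff_coprime]
      refine Nat.Coprime.pow_right N ?_
      have hp2 : ¬ (2 ∣ p) := by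
        rcases hodd with ⟨t, ht⟩
        omega
      exact (Nat.coprime_primes Nat.prime_two hp).mpr (fun h => hp2 (h ▸ dvd_refl 2)) |>.symm.symm
    simpa using this
  -- powers agree
  have hpow : ∀ l : ℕ, ((l : ZMod q)) ^ (2 * m + 1) = (l : ZMod q) ^ (2 * n + 1) := by
    intro l
    by_cases hl : p ∣ l
    · have hz : ∀ t : ℕ, N ≤ t → (l : ZMod q) ^ t = 0 := by
        intro t ht
        have hdvd : q ∣ l ^ t :=
          dvd_trans (pow_dvd_pow_of_dvd hl N) (pow_dvd_pow l ht)
        have : ((l ^ t : ℕ) : ZMod q) = 0 := (ZMod.natCast_eq_zero_iff _ _).mpr hdvd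
        rwa [Nat.cast_pow] at this
      rw [hz _ (by omega), hz _ (by omega)]
    · have hcop : Nat.Coprime l q :=
        Nat.Coprime.pow_right N (((hp.coprime_iff_not_dvd).mpr hl).symm)
      set u := ZMod.unitOfCoprime l hcop with hu
      have huval : (u : ZMod q) = (l : ZMod q) := ZMod.coe_unitOfCoprime l hcop
      have horder : orderOf u ∣ Nat.totient q := by
        rw [← ZMod.card_units_eq_totient q]
        exact orderOf_dvd_card
      have hme : 2 * m + 1 ≡ 2 * n + 1 [MOD orderOf u] :=
        (Nat.ModEq.of_dvd horder hmod).add_right 1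
      have hupow : u ^ (2 * m + 1) = u ^ (2 * n + 1) := pow_eq_pow_iff_modEq.mpr hme
      calc (l : ZMod q) ^ (2 * m + 1) = ((u ^ (2 * m + 1) : (ZMod q)ˣ) : ZMod q) := by
            rw [Units.val_pow_eq_pow_val, huval]
        _ = ((u ^ (2 * n + 1) : (ZMod q)ˣ) : ZMod q) := by rw [hupow]
        _ = (l : ZMod q) ^ (2 * n + 1) := by rw [Units.val_pow_eq_pow_val, huval]
  -- key per-index congruence
  have key : ∀ j : ℕ, (((j + 1).factorial : ZMod q)) * (stirling2 (2 * m + 1) (j + 1) : ZMod q)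
      = ((j + 1).factorial : ZMod q) * (stirling2 (2 * n + 1) (j + 1) : ZMod q) := by
    intro j
    have h1 := congrArg (fun z : ℤ => (z : ZMod q)) (stirling2_formula (2 * m + 1) (j + 1))
    have h2 := congrArg (fun z : ℤ => (z : ZMod q)) (stirling2_formula (2 * n + 1) (j + 1))
    push_cast at h1 h2
    rw [h1, h2]
    exact Finset.sum_congr rfl fun l _ => by rw [hpow l]
  -- A-level congruence
  have hA : ((Acs m k : ℕ) : ZMod q) = ((Acs n k : ℕ) : ZMod q) := by
    unfold Acs
    push_cast
    refine Finset.sum_congr rfl fun i hi => ?_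
    rw [Finset.mem_Icc] at hi
    obtain ⟨j, rfl⟩ : ∃ j, i = j + 1 := ⟨i - 1, by omega⟩
    simp only [Nat.add_sub_cancel]
    refine IsUnit.mul_left_cancel (h2unit.pow j) ?_
    have hE : ((Efac j : ZMod q)) * 2 ^ j = ((j + 1).factorial : ZMod q) * (j.factorial : ZMod q) := by
      have := congrArg (fun x : ℕ => (x : ZMod q)) (Efac_mul_two_pow j)
      push_cast at this
      exact this
    calc (2 : ZMod q) ^ j * ((Efac j : ZMod q) * (stirling2 k (j+1) : ZMod q) * (stirling2 (2*m+1) (j+1) : ZMod q))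
        = ((j.factorial : ZMod q) * (stirling2 k (j+1) : ZMod q)) * (((j+1).factorial : ZMod q) * (stirling2 (2*m+1) (j+1) : ZMod q)) := by
          linear_combination ((stirling2 k (j+1) : ZMod q) * (stirling2 (2*m+1) (j+1) : ZMod q)) * hE
      _ = ((j.factorial : ZMod q) * (stirling2 k (j+1) : ZMod q)) * (((j+1).factorial : ZMod q) * (stirling2 (2*n+1) (j+1) : ZMod q)) := by
          rw [key j]
      _ = (2 : ZMod q) ^ j * ((Efac j : ZMod q) * (stirling2 k (j+1) : ZMod q) * (stirling2 (2*n+1) (j+1) : ZMod q)) := by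
          linear_combination (-(stirling2 k (j+1) : ZMod q) * (stirling2 (2*n+1) (j+1) : ZMod q)) * hE
  -- conclude
  have hdvd : ((q : ℤ)) ∣ ((Acs m k : ℤ) - (Acs n k : ℤ)) := by
    refine (ZMod.intCast_zmod_eq_zero_iff_dvd _ q).mp ?_
    push_cast
    rw [hA, sub_self]
  obtain ⟨c, hc⟩ := hdvd
  refine ⟨c, ?_⟩
  rw [Dneg_eq, Dneg_eq]
  have : ((Acs m k : ℤ) : ℚ) - ((Acs n k : ℤ) : ℚ) = ((q : ℤ) : ℚ) * (c : ℚ) := by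
    exact_mod_cast congrArg (fun z : ℤ => (z : ℚ)) hc
  push_cast at this
  rw [hq] at this
  push_cast at this
  linarith [this]
end

section
/- For all positive integers n and k, the polycosecant number D_{2n}^{(-2k)} is divisible by 2^{2n}. -/
open Finset

lemma s2_zero_right (k : ℕ) : stirling2 (k+1) 0 = 0 := rfl

lemma s2_eq_zero : ∀ {N i : ℕ}, N < i → stirling2 N i = 0 := by
  intro N
  induction N with
  | zero => intro i h; match i, h with | (i+1), _ => rfl
  | succ N ih =>
    intro i h
    match i, h with
    | (i+1), h =>
      show stirling2 N i + (i + 1) * stirling2 N (i+1) = 0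
      rw [ih (by omega), ih (by omega)]; simp

lemma s2_one_right : ∀ N : ℕ, stirling2 (N+1) 1 = 1 := by
  intro N
  induction N with
  | zero => rfl
  | succ N ih => show stirling2 (N+1) 0 + 1 * stirling2 (N+1) 1 = 1; rw [s2_zero_right, ih]

lemma RZ (n k : ℕ) : ((k:ℤ)+1) * (n.choose (k+1)) = ((n:ℤ) - k) * n.choose k := by
  rcases le_or_gt k n with h | h
  · have := Nat.choose_succ_right_eq n k
    have h2 : ((n.choose (k+1) * (k+1) : ℕ) : ℤ) = ((n.choose k * (n - k) : ℕ) : ℤ) := by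
      rw [this]
    push_cast [Nat.cast_sub h] at h2
    linarith
  · rw [Nat.choose_eq_zero_of_lt h, Nat.choose_eq_zero_of_lt (by omega)]
    simp

lemma jC (i j : ℕ) : (j:ℤ) * ((i+1).choose j) = ((i:ℤ)+1) * ((i+1).choose j) - ((i:ℤ)+1) * (i.choose j) := by
  cases j with
  | zero => simp
  | succ j =>
    have h1 := Nat.add_one_mul_choose_eq i j
    have h1' : ((i:ℤ)+1) * (i.choose j) = ((i+1).choose (j+1)) * ((j:ℤ)+1) := by exact_mod_cast h1
    have hp : ((i+1).choose (j+1) : ℤ) = (i.choose j : ℤ) + (i.choose (j+1) : ℤ) := by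
      rw [Nat.choose_succ_succ]; push_cast; ring
    push_cast
    linear_combination -h1' - ((i:ℤ)+1) * hp

def Falt (i N : ℕ) : ℤ := ∑ j ∈ range (i+1), (-1)^j * (i.choose j) * (j:ℤ)^N

lemma Falt_zero (N : ℕ) : Falt 0 N = (0:ℤ)^N := by simp [Falt]

lemma Falt_succ (i N : ℕ) : Falt (i+1) (N+1) = ((i:ℤ)+1) * (Falt (i+1) N - Falt i N) := by
  unfold Falt
  have step : ∀ j ∈ range (i+2), (-1:ℤ)^j * ((i+1).choose j) * (j:ℤ)^(N+1)
      = ((i:ℤ)+1) * ((-1)^j * ((i+1).choose j) * (j:ℤ)^N) - ((i:ℤ)+1) * ((-1)^j * (i.choose j) * (j:ℤ)^N) := by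
    intro j _
    have h := jC i j
    have : (j:ℤ)^(N+1) = (j:ℤ)^N * j := by ring
    rw [this]
    linear_combination ((-1:ℤ)^j * (j:ℤ)^N) * h
  rw [Finset.sum_congr rfl step, Finset.sum_sub_distrib, ← Finset.mul_sum, ← Finset.mul_sum]
  have : ∑ j ∈ range (i+2), (-1:ℤ)^j * (i.choose j) * (j:ℤ)^N
      = ∑ j ∈ range (i+1), (-1:ℤ)^j * (i.choose j) * (j:ℤ)^N := by
    rw [Finset.sum_range_succ, Nat.choose_succ_self]
    simp
  rw [this, mul_sub]

lemma FS : ∀ N i : ℕ, Falt i N = (-1)^i * (i.factorial : ℤ) * stirling2 N i := by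
  intro N
  induction N with
  | zero =>
    intro i
    cases i with
    | zero => simp [Falt, stirling2]
    | succ i =>
      have h := add_pow (-1 : ℤ) 1 (i+1)
      simp only [one_pow, mul_one, neg_add_cancel, zero_pow (Nat.succ_ne_zero i)] at h
      unfold Falt
      simp only [pow_zero, mul_one]
      rw [← h]
      simp [stirling2]
  | succ N ih =>
    intro i
    cases i with
    | zero =>
      rw [Falt_zero]
      simp [stirling2, zero_pow (Nat.succ_ne_zero N)]
    | succ i =>
      rw [Falt_succ, ih, ih]
      show _ = (-1:ℤ)^(i+1) * ((i+1).factorial : ℤ) * (stirling2 N i + (i + 1) * stirling2 N (i+1) : ℕ)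
      rw [Nat.factorial_succ]
      push_cast
      ring
open Finset

lemma sum_range_pair {M : Type*} [AddCommMonoid M] (s : ℕ) (f : ℕ → M) :
    ∑ t ∈ range (2*s+2), f t = ∑ r ∈ range (s+1), (f (2*r) + f (2*r+1)) := by
  induction s with
  | zero => simp [Finset.sum_range_succ]
  | succ s ih =>
    have e : 2*(s+1)+2 = (2*s+2)+1+1 := by ring
    rw [e, Finset.sum_range_succ, Finset.sum_range_succ, ih, Finset.sum_range_succ]
    have e1 : 2*s+2 = 2*(s+1) := by ring
    have e2 : 2*s+2+1 = 2*(s+1)+1 := by ring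
    rw [e1, e2, Finset.sum_range_succ (fun r => f (2 * r) + f (2 * r + 1)) (s+1),
      Finset.sum_range_succ (fun r => f (2 * r) + f (2 * r + 1)) s]
    abel

lemma P_id {R : Type*} [CommRing R] (x : R) (s : ℕ) :
    (x+1)^(2*s+1) - (x-1)^(2*s+1) = 2 * ∑ r ∈ range (s+1), ((2*s+1).choose (2*r) : R) * x^(2*r) := by
  have h1 := add_pow x (1:R) (2*s+1)
  have h2 := add_pow x (-1:R) (2*s+1)
  have hx : x - 1 = x + (-1) := by ring
  rw [h1, hx, h2, ← Finset.sum_sub_distrib]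
  have e : 2*s+1+1 = 2*s+2 := by ring
  rw [e, sum_range_pair, Finset.mul_sum]
  apply Finset.sum_congr rfl
  intro r hr
  have hr' : r ≤ s := by simpa using Nat.lt_succ_iff.mp (Finset.mem_range.mp hr)
  have ho : (-1:R)^(2*s+1-2*r) = -1 := Odd.neg_one_pow ⟨s-r, by omega⟩
  have he : (-1:R)^(2*s+1-(2*r+1)) = 1 := Even.neg_one_pow ⟨s-r, by omega⟩
  rw [ho, he]
  simp only [one_pow, mul_one]
  ring

lemma POW {R : Type*} [CommRing R] (x : R) (n : ℕ) :
    2 * ∑ m ∈ range (n+1), ((2*n+1).choose (2*m+1) : R) * x^(2*(n-m)+1)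
      = x * ((x+1)^(2*n+1) - (x-1)^(2*n+1)) := by
  rw [P_id]
  have hrefl := Finset.sum_range_reflect
    (fun m => ((2*n+1).choose (2*m+1) : R) * x^(2*(n-m)+1)) (n+1)
  simp only [Nat.add_sub_cancel] at hrefl
  rw [← hrefl]
  have congr1 : ∀ j ∈ range (n+1),
      ((2*n+1).choose (2*(n-j)+1) : R) * x^(2*(n-(n-j))+1)
        = ((2*n+1).choose (2*j) : R) * x^(2*j+1) := by
    intro j hj
    have hj' : j ≤ n := by simpa using Nat.lt_succ_iff.mp (Finset.mem_range.mp hj)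
    have e1 : 2*(n-j)+1 = 2*n+1 - 2*j := by omega
    have e2 : n - (n-j) = j := by omega
    have e3 : (2*n+1).choose (2*n+1 - 2*j) = (2*n+1).choose (2*j) :=
      Nat.choose_symm (by omega)
    rw [e1, e2, e3]
  rw [Finset.sum_congr rfl congr1, Finset.mul_sum, Finset.mul_sum]
  rw [Finset.mul_sum]
  apply Finset.sum_congr rfl
  intro j _
  ring

lemma coef_id (i t : ℕ) : ((t:ℤ)+2) * (i.choose (t+2)) - t * (i.choose t)
    = 2*i*(i.choose (t+1)) - i * ((i+1).choose (t+1)) := by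
  have h1 := RZ i (t+1)
  have h2 := RZ i t
  have hp : (((i+1).choose (t+1) : ℕ) : ℤ) = i.choose t + i.choose (t+1) := by
    rw [Nat.choose_succ_succ]; push_cast; ring
  push_cast at h1 h2 ⊢
  linear_combination h1 - h2 + (i:ℤ)*hp

lemma Tsum (i N : ℕ) (hN : N ≠ 0) :
    ∑ j ∈ range (i+1), (-1:ℤ)^j * (i.choose j) * ((j:ℤ) * (((j:ℤ)+1)^N - ((j:ℤ)-1)^N))
      = 2 * i * Falt i N - i * Falt (i+1) N := by
  have split : ∀ j ∈ range (i+1), (-1:ℤ)^j * (i.choose j) * ((j:ℤ) * (((j:ℤ)+1)^N - ((j:ℤ)-1)^N))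
      = (-1:ℤ)^j * (i.choose j) * (j:ℤ) * ((j:ℤ)+1)^N - (-1:ℤ)^j * (i.choose j) * (j:ℤ) * ((j:ℤ)-1)^N := by
    intro j _; ring
  rw [Finset.sum_congr rfl split, Finset.sum_sub_distrib]
  have hT1 : ∑ j ∈ range (i+1), (-1:ℤ)^j * (i.choose j) * (j:ℤ) * ((j:ℤ)+1)^N
      = -∑ l ∈ range (i+2), (-1:ℤ)^l * (i.choose (l-1)) * ((l:ℤ)-1) * (l:ℤ)^N := by
    rw [Finset.sum_range_succ' (fun l => (-1:ℤ)^l * (i.choose (l-1)) * ((l:ℤ)-1) * (l:ℤ)^N) (i+1)]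
    simp only [Nat.add_sub_cancel, Nat.cast_zero, zero_pow hN, mul_zero, add_zero]
    rw [← Finset.sum_neg_distrib]
    apply Finset.sum_congr rfl
    intro j _
    push_cast
    ring
  have hT2 : ∑ j ∈ range (i+1), (-1:ℤ)^j * (i.choose j) * (j:ℤ) * ((j:ℤ)-1)^N
      = -∑ l ∈ range (i+2), (-1:ℤ)^l * (i.choose (l+1)) * ((l:ℤ)+1) * (l:ℤ)^N := by
    rw [Finset.sum_range_succ' (fun j => (-1:ℤ)^j * (i.choose j) * (j:ℤ) * ((j:ℤ)-1)^N) i]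
    simp only [Nat.cast_zero, mul_zero, zero_mul, add_zero]
    rw [Finset.sum_range_succ, Finset.sum_range_succ, Nat.choose_succ_self]
    have : i.choose (i+1+1) = 0 := Nat.choose_eq_zero_of_lt (by omega)
    rw [this]
    simp only [Nat.cast_zero, zero_mul, mul_zero, add_zero, Nat.cast_ofNat]
    rw [← Finset.sum_neg_distrib]
    apply Finset.sum_congr rfl
    intro j _
    push_cast
    ring
  have hF1 : Falt i N = ∑ l ∈ range (i+2), (-1:ℤ)^l * (i.choose l) * (l:ℤ)^N := by
    unfold Falt
    rw [Finset.sum_range_succ _ (i+1), Nat.choose_succ_self]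
    simp
  have hF2 : Falt (i+1) N = ∑ l ∈ range (i+2), (-1:ℤ)^l * ((i+1).choose l) * (l:ℤ)^N := rfl
  rw [hT1, hT2, neg_sub_neg, ← Finset.sum_sub_distrib, hF1, hF2, Finset.mul_sum,
    Finset.mul_sum, ← Finset.sum_sub_distrib]
  apply Finset.sum_congr rfl
  intro l _
  cases l with
  | zero => simp [zero_pow hN]
  | succ t =>
    have hc := coef_id i t
    simp only [Nat.add_sub_cancel]
    push_cast
    linear_combination ((-1:ℤ)^(t+1) * ((t:ℤ)+1)^N) * hc

lemma KEYF (n i : ℕ) :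
    2 * ∑ m ∈ range (n+1), ((2*n+1).choose (2*m+1) : ℤ) * Falt i (2*(n-m)+1)
      = 2 * i * Falt i (2*n+1) - i * Falt (i+1) (2*n+1) := by
  have expand : ∀ m ∈ range (n+1), ((2*n+1).choose (2*m+1) : ℤ) * Falt i (2*(n-m)+1)
      = ∑ j ∈ range (i+1), ((2*n+1).choose (2*m+1) : ℤ) * ((-1)^j * (i.choose j) * (j:ℤ)^(2*(n-m)+1)) := by
    intro m _; unfold Falt; rw [Finset.mul_sum]
  rw [Finset.sum_congr rfl expand, Finset.sum_comm, Finset.mul_sum]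
  have perj : ∀ j ∈ range (i+1),
      2 * ∑ m ∈ range (n+1), ((2*n+1).choose (2*m+1) : ℤ) * ((-1)^j * (i.choose j) * (j:ℤ)^(2*(n-m)+1))
      = (-1:ℤ)^j * (i.choose j) * ((j:ℤ) * (((j:ℤ)+1)^(2*n+1) - ((j:ℤ)-1)^(2*n+1))) := by
    intro j _
    have hp := POW ((j:ℤ)) n
    calc 2 * ∑ m ∈ range (n+1), ((2*n+1).choose (2*m+1) : ℤ) * ((-1)^j * (i.choose j) * (j:ℤ)^(2*(n-m)+1))
        = (-1:ℤ)^j * (i.choose j) * (2 * ∑ m ∈ range (n+1), ((2*n+1).choose (2*m+1) : ℤ) * (j:ℤ)^(2*(n-m)+1)) := by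
          rw [Finset.mul_sum, Finset.mul_sum, Finset.mul_sum]
          apply Finset.sum_congr rfl; intro m _; ring
      _ = _ := by rw [hp]
  rw [Finset.sum_congr rfl perj]
  exact Tsum i (2*n+1) (by omega)

lemma KEYZ (n i : ℕ) :
    2 * ∑ m ∈ range (n+1), ((2*n+1).choose (2*m+1) : ℤ) * (stirling2 (2*(n-m)+1) i : ℤ)
      = 2*i*(stirling2 (2*n+1) i : ℤ) + i*(i+1)*(stirling2 (2*n+1) (i+1) : ℤ) := by
  have hK := KEYF n i
  simp only [FS] at hK
  have hf : (((i+1).factorial : ℕ) : ℤ) = ((i:ℤ)+1) * (i.factorial : ℤ) := by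
    rw [Nat.factorial_succ]; push_cast; ring
  rw [hf] at hK
  have hpull : ∑ m ∈ range (n+1), ((2*n+1).choose (2*m+1) : ℤ) *
        ((-1)^i * (i.factorial : ℤ) * (stirling2 (2*(n-m)+1) i : ℤ))
      = (-1:ℤ)^i * (i.factorial : ℤ) *
        ∑ m ∈ range (n+1), ((2*n+1).choose (2*m+1) : ℤ) * (stirling2 (2*(n-m)+1) i : ℤ) := by
    rw [Finset.mul_sum]
    apply Finset.sum_congr rfl; intro m _; ring
  rw [hpull] at hK
  have hfac : ((-1:ℤ)^i * (i.factorial : ℤ)) ≠ 0 := by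
    apply mul_ne_zero
    · exact pow_ne_zero _ (by norm_num)
    · exact_mod_cast i.factorial_ne_zero
  apply mul_left_cancel₀ hfac
  linear_combination hK

lemma KEY (n i : ℕ) :
    2 * ∑ m ∈ range (n+1), ((2*n+1).choose (2*m+1) : ℚ) * (stirling2 (2*(n-m)+1) i : ℚ)
      = 2*i*(stirling2 (2*n+1) i : ℚ) + i*(i+1)*(stirling2 (2*n+1) (i+1) : ℚ) := by
  exact_mod_cast KEYZ n i

lemma sum_Icc_one {M : Type*} [AddCommMonoid M] (B : ℕ) (f : ℕ → M) :
    ∑ i ∈ Icc 1 B, f i = ∑ j ∈ range B, f (j+1) := by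
  have h : Icc 1 B = Ico 1 (B+1) := by rw [Finset.Ico_add_one_right_eq_Icc]
  rw [h, Finset.sum_Ico_eq_sum_range]
  simp only [Nat.add_sub_cancel]
  apply Finset.sum_congr rfl
  intro j _
  rw [Nat.add_comm]

lemma Dneg_eq_s12 (n k M : ℕ) (h : min (2*n+1) k ≤ M) :
    Dneg n k = ∑ i ∈ Icc 1 M,
      (Nat.factorial i * Nat.factorial (i - 1) : ℚ) / 2 ^ (i - 1) *
        (stirling2 k i : ℚ) * (stirling2 (2*n+1) i : ℚ) := by
  unfold Dneg
  apply Finset.sum_subset (Finset.Icc_subset_Icc_right h)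
  intro i hi hni
  simp only [Finset.mem_Icc] at hi hni
  have : 2*n+1 < i ∨ k < i := by omega
  rcases this with h' | h'
  · rw [s2_eq_zero h', Nat.cast_zero, mul_zero]
  · rw [s2_eq_zero h', Nat.cast_zero, mul_zero, zero_mul]

lemma Dneg_one (n : ℕ) : Dneg n 1 = 1 := by
  rw [Dneg_eq_s12 n 1 1 (by omega)]
  have h1 : stirling2 1 1 = 1 := rfl
  rw [show Icc 1 1 = {1} from rfl, Finset.sum_singleton, h1,
    show (2*n+1) = (2*n)+1 from rfl, s2_one_right]
  norm_num [Nat.factorial]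

lemma Dneg_zero_left (k : ℕ) (hk : 1 ≤ k) : Dneg 0 k = 1 := by
  rw [Dneg_eq_s12 0 k 1 (by omega)]
  rw [show Icc 1 1 = {1} from rfl, Finset.sum_singleton]
  obtain ⟨k', rfl⟩ : ∃ k', k = k'+1 := ⟨k-1, by omega⟩
  rw [s2_one_right]
  have h1 : stirling2 (2*0+1) 1 = 1 := rfl
  rw [h1]
  norm_num [Nat.factorial]

lemma Dneg_rec (n k : ℕ) (hk : 1 ≤ k) :
    Dneg n (k+1) = ∑ m ∈ range (n+1), ((2*n+1).choose (2*m+1) : ℚ) * Dneg (n-m) k := by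
  obtain ⟨k', rfl⟩ : ∃ k', k = k'+1 := ⟨k-1, by omega⟩
  have hDm : ∀ m ∈ range (n+1), ((2*n+1).choose (2*m+1) : ℚ) * Dneg (n-m) (k'+1)
      = ((2*n+1).choose (2*m+1) : ℚ) * ∑ j ∈ range (2*n+2),
          ((j+1).factorial * j.factorial : ℚ) / 2 ^ j *
            (stirling2 (k'+1) (j+1) : ℚ) * (stirling2 (2*(n-m)+1) (j+1) : ℚ) := by
    intro m hm
    rw [Dneg_eq_s12 (n-m) (k'+1) (2*n+2) (by omega), sum_Icc_one]
    simp only [Nat.add_sub_cancel]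
  rw [Finset.sum_congr rfl hDm]
  rw [Dneg_eq_s12 n (k'+1+1) (2*n+2) (by omega), sum_Icc_one]
  simp only [Nat.add_sub_cancel]
  have swap : ∑ m ∈ range (n+1), ((2*n+1).choose (2*m+1) : ℚ) * ∑ j ∈ range (2*n+2),
        ((j+1).factorial * j.factorial : ℚ) / 2 ^ j *
          (stirling2 (k'+1) (j+1) : ℚ) * (stirling2 (2*(n-m)+1) (j+1) : ℚ)
      = ∑ j ∈ range (2*n+2), ((j+1).factorial * j.factorial : ℚ) / 2 ^ j *
          (stirling2 (k'+1) (j+1) : ℚ) *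
          ∑ m ∈ range (n+1), ((2*n+1).choose (2*m+1) : ℚ) * (stirling2 (2*(n-m)+1) (j+1) : ℚ) := by
    calc ∑ m ∈ range (n+1), ((2*n+1).choose (2*m+1) : ℚ) * ∑ j ∈ range (2*n+2),
            ((j+1).factorial * j.factorial : ℚ) / 2 ^ j *
              (stirling2 (k'+1) (j+1) : ℚ) * (stirling2 (2*(n-m)+1) (j+1) : ℚ)
        = ∑ m ∈ range (n+1), ∑ j ∈ range (2*n+2), ((2*n+1).choose (2*m+1) : ℚ) *
            (((j+1).factorial * j.factorial : ℚ) / 2 ^ j *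
              (stirling2 (k'+1) (j+1) : ℚ) * (stirling2 (2*(n-m)+1) (j+1) : ℚ)) := by
          apply Finset.sum_congr rfl; intro m _; rw [Finset.mul_sum]
      _ = ∑ j ∈ range (2*n+2), ∑ m ∈ range (n+1), ((2*n+1).choose (2*m+1) : ℚ) *
            (((j+1).factorial * j.factorial : ℚ) / 2 ^ j *
              (stirling2 (k'+1) (j+1) : ℚ) * (stirling2 (2*(n-m)+1) (j+1) : ℚ)) := Finset.sum_comm
      _ = _ := by
          apply Finset.sum_congr rfl; intro j _
          rw [Finset.mul_sum]
          apply Finset.sum_congr rfl; intro m _; ring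
  rw [swap]
  have expand : ∀ j ∈ range (2*n+2),
      ((j+1).factorial * j.factorial : ℚ)/2^j * (stirling2 (k'+1+1) (j+1) : ℚ) * (stirling2 (2*n+1) (j+1) : ℚ)
      = ((j+1).factorial * j.factorial : ℚ)/2^j * (stirling2 (k'+1) j : ℚ) * (stirling2 (2*n+1) (j+1) : ℚ)
        + ((j:ℚ)+1) * (((j+1).factorial * j.factorial : ℚ)/2^j) * (stirling2 (k'+1) (j+1) : ℚ) * (stirling2 (2*n+1) (j+1) : ℚ) := by
    intro j _
    have hs : stirling2 (k'+1+1) (j+1) = stirling2 (k'+1) j + (j+1) * stirling2 (k'+1) (j+1) := rfl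
    rw [hs]; push_cast; ring
  rw [Finset.sum_congr rfl expand, Finset.sum_add_distrib]
  have shift : ∑ j ∈ range (2*n+2),
      ((j+1).factorial * j.factorial : ℚ)/2^j * (stirling2 (k'+1) j : ℚ) * (stirling2 (2*n+1) (j+1) : ℚ)
      = ∑ j ∈ range (2*n+2),
          ((j+2).factorial * (j+1).factorial : ℚ)/2^(j+1) * (stirling2 (k'+1) (j+1) : ℚ) * (stirling2 (2*n+1) (j+2) : ℚ) := by
    rw [Finset.sum_range_succ' (fun j => ((j+1).factorial * j.factorial : ℚ)/2^j *
      (stirling2 (k'+1) j : ℚ) * (stirling2 (2*n+1) (j+1) : ℚ)) (2*n+1)]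
    have hz : stirling2 (k'+1) 0 = 0 := rfl
    rw [Finset.sum_range_succ (fun j => ((j+2).factorial * (j+1).factorial : ℚ)/2^(j+1) *
      (stirling2 (k'+1) (j+1) : ℚ) * (stirling2 (2*n+1) (j+2) : ℚ)) (2*n+1)]
    rw [hz, s2_eq_zero (show 2*n+1 < 2*n+1+2 by omega)]
    simp
  rw [shift, ← Finset.sum_add_distrib]
  apply Finset.sum_congr rfl
  intro j _
  have hK := KEY n (j+1)
  simp only [Nat.factorial_succ]
  push_cast at hK ⊢
  linear_combination (-(((j:ℚ)+1) * j.factorial * j.factorial * (stirling2 (k'+1) (j+1) : ℚ)) / 2^(j+1)) * hK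


section Poly
open Polynomial

theorem P_poly (n : ℕ) :
    ((X+1) * (X+2)^(2*n+1) + (1-X) * (2-X)^(2*n+1) : Polynomial ℤ)
      = 4 * (∑ r ∈ range (n+1),
          ((∑ m ∈ Icc r n, (2*n+1).choose (2*m) * ((2*m+1).choose (2*r)) : ℕ) : Polynomial ℤ) * X^(2*r))
        + 2 * X^(2*n+2) := by
  have pa : ((X+2:Polynomial ℤ))^(2*n+1) - X^(2*n+1)
      = 2 * ∑ m ∈ range (n+1), ((2*n+1).choose (2*m) : Polynomial ℤ) * (X+1)^(2*m) := by
    have h := P_id ((X:Polynomial ℤ)+1) n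
    have e1 : ((X:Polynomial ℤ)+1)+1 = X+2 := by ring
    have e2 : ((X:Polynomial ℤ)+1)-1 = X := by ring
    rw [e1, e2] at h
    exact h
  have pb : ((2-X:Polynomial ℤ))^(2*n+1) + X^(2*n+1)
      = 2 * ∑ m ∈ range (n+1), ((2*n+1).choose (2*m) : Polynomial ℤ) * (1-X)^(2*m) := by
    have h := P_id ((1:Polynomial ℤ)-X) n
    have e1 : ((1:Polynomial ℤ)-X)+1 = 2-X := by ring
    have e2 : ((1:Polynomial ℤ)-X)-1 = -X := by ring
    rw [e1, e2, Odd.neg_pow ⟨n, by omega⟩] at h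
    linear_combination h
  have key1 : ∀ m : ℕ, ((X:Polynomial ℤ)+1)^(2*m+1) + (1-X)^(2*m+1)
      = 2 * ∑ r ∈ range (m+1), ((2*m+1).choose (2*r) : Polynomial ℤ) * X^(2*r) := by
    intro m
    have h := P_id (X:Polynomial ℤ) m
    have e : ((1:Polynomial ℤ)-X)^(2*m+1) = -((X-1)^(2*m+1)) := by
      rw [show ((1:Polynomial ℤ)-X) = -(X-1) by ring, Odd.neg_pow ⟨m, by omega⟩]
    rw [e]
    linear_combination h
  have step1 : ((X+1) * (X+2)^(2*n+1) + (1-X) * (2-X)^(2*n+1) : Polynomial ℤ)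
      = 2*X^(2*n+2) + 2 * ∑ m ∈ range (n+1), ((2*n+1).choose (2*m) : Polynomial ℤ) *
          ((X+1)^(2*m+1) + (1-X)^(2*m+1)) := by
    have expand : ∑ m ∈ range (n+1), ((2*n+1).choose (2*m) : Polynomial ℤ) * ((X+1)^(2*m+1) + (1-X)^(2*m+1))
        = (X+1) * ∑ m ∈ range (n+1), ((2*n+1).choose (2*m) : Polynomial ℤ) * (X+1)^(2*m)
          + (1-X) * ∑ m ∈ range (n+1), ((2*n+1).choose (2*m) : Polynomial ℤ) * (1-X)^(2*m) := by
      rw [Finset.mul_sum, Finset.mul_sum, ← Finset.sum_add_distrib]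
      apply Finset.sum_congr rfl; intro m _; ring
    linear_combination (X+1:Polynomial ℤ)*pa + (1-X:Polynomial ℤ)*pb - 2*expand
  rw [step1]
  have step2 : ∑ m ∈ range (n+1), ((2*n+1).choose (2*m) : Polynomial ℤ) *
        ((X+1)^(2*m+1) + (1-X)^(2*m+1))
      = 2 * ∑ m ∈ range (n+1), ∑ r ∈ range (m+1),
          ((2*n+1).choose (2*m) : Polynomial ℤ) * (((2*m+1).choose (2*r) : Polynomial ℤ) * X^(2*r)) := by
    rw [Finset.mul_sum]
    apply Finset.sum_congr rfl; intro m _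
    rw [key1 m, Finset.mul_sum, Finset.mul_sum, Finset.mul_sum]
    apply Finset.sum_congr rfl; intro r _; ring
  rw [step2]
  have step3 : ∑ m ∈ range (n+1), ∑ r ∈ range (m+1),
        ((2*n+1).choose (2*m) : Polynomial ℤ) * (((2*m+1).choose (2*r) : Polynomial ℤ) * X^(2*r))
      = ∑ r ∈ range (n+1),
          ((∑ m ∈ Icc r n, (2*n+1).choose (2*m) * ((2*m+1).choose (2*r)) : ℕ) : Polynomial ℤ) * X^(2*r) := by
    rw [Finset.sum_comm' (t' := range (n+1)) (s' := fun r => Icc r n)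
      (by intro m r; simp only [Finset.mem_range, Finset.mem_Icc]; omega)]
    apply Finset.sum_congr rfl; intro r _
    push_cast
    rw [Finset.sum_mul]
    apply Finset.sum_congr rfl; intro m _; ring
  rw [step3]; ring

lemma coeff_X_add_one_mul (p : Polynomial ℤ) (t : ℕ) :
    ((X+1) * p).coeff (t+1) = p.coeff t + p.coeff (t+1) := by
  have e : ((X+1) * p : Polynomial ℤ) = X*p + p := by ring
  rw [e, Polynomial.coeff_add, Polynomial.coeff_X_mul]

lemma coeff_one_sub_mul (p : Polynomial ℤ) (t : ℕ) :
    ((1-X) * p).coeff (t+1) = p.coeff (t+1) - p.coeff t := by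
  have e : ((1-X) * p : Polynomial ℤ) = p - X*p := by ring
  rw [e, Polynomial.coeff_sub, Polynomial.coeff_X_mul]

lemma AA_val (n r : ℕ) (h1 : 1 ≤ r) (h2 : r ≤ n) :
    (∑ m ∈ Icc r n, (2*n+1).choose (2*m) * ((2*m+1).choose (2*r)) : ℕ)
      = 4^(n-r) * ((2*n+1).choose (2*r) + 2 * (2*n+1).choose (2*r-1)) := by
  have h2C : (Polynomial.C (2:ℤ)) = (2:Polynomial ℤ) := map_ofNat _ 2
  have h4C : (Polynomial.C (4:ℤ)) = (4:Polynomial ℤ) := map_ofNat _ 4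
  have hXC : (X+2 : Polynomial ℤ) = X + Polynomial.C 2 := by rw [h2C]
  have em : (X + Polynomial.C (-2) : Polynomial ℤ) = -(2-X) := by
    rw [map_neg, h2C]; ring
  have eq2 : ((2-X:Polynomial ℤ))^(2*n+1) = -((X + Polynomial.C (-2))^(2*n+1)) := by
    rw [em, Odd.neg_pow ⟨n, by omega⟩, neg_neg]
  obtain ⟨t, ht⟩ : ∃ t, 2*r = t+1 := ⟨2*r-1, by omega⟩
  have hcoeffA : ((X+1) * (X+2)^(2*n+1) : Polynomial ℤ).coeff (2*r)
      = (2:ℤ)^(2*n+1-2*r) * ((2*n+1).choose (2*r)) + (2:ℤ)^(2*n+2-2*r) * ((2*n+1).choose (2*r-1)) := by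
    rw [ht, coeff_X_add_one_mul, hXC, Polynomial.coeff_X_add_C_pow, Polynomial.coeff_X_add_C_pow]
    rw [show t = 2*r-1 by omega, show (2*r-1)+1 = 2*r by omega,
      show 2*n+1-(2*r-1) = 2*n+2-2*r by omega]
    ring
  have hcoeffB : ((1-X) * (2-X)^(2*n+1) : Polynomial ℤ).coeff (2*r)
      = (2:ℤ)^(2*n+1-2*r) * ((2*n+1).choose (2*r)) + (2:ℤ)^(2*n+2-2*r) * ((2*n+1).choose (2*r-1)) := by
    rw [ht, coeff_one_sub_mul, eq2, Polynomial.coeff_neg, Polynomial.coeff_neg,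
      Polynomial.coeff_X_add_C_pow, Polynomial.coeff_X_add_C_pow]
    rw [show t = 2*r-1 by omega, show (2*r-1)+1 = 2*r by omega,
      show 2*n+1-(2*r-1) = 2*n+2-2*r by omega]
    have o1 : ((-2):ℤ)^(2*n+1-2*r) = -((2:ℤ)^(2*n+1-2*r)) := Odd.neg_pow ⟨n-r, by omega⟩ 2
    have o2 : ((-2):ℤ)^(2*n+2-2*r) = (2:ℤ)^(2*n+2-2*r) := Even.neg_pow ⟨n+1-r, by omega⟩ 2
    rw [o1, o2]
    ring
  have hRHS : ((4 * (∑ r' ∈ range (n+1),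
        ((∑ m ∈ Icc r' n, (2*n+1).choose (2*m) * ((2*m+1).choose (2*r')) : ℕ) : Polynomial ℤ) * X^(2*r'))
        + 2 * X^(2*n+2)) : Polynomial ℤ).coeff (2*r)
      = 4 * ((∑ m ∈ Icc r n, (2*n+1).choose (2*m) * ((2*m+1).choose (2*r)) : ℕ) : ℤ) := by
    rw [Polynomial.coeff_add]
    have hx : ((2:Polynomial ℤ) * X^(2*n+2)).coeff (2*r) = 0 := by
      rw [← h2C, Polynomial.coeff_C_mul, Polynomial.coeff_X_pow, if_neg (by omega), mul_zero]
    have h4 : ((4:Polynomial ℤ) * (∑ r' ∈ range (n+1),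
          ((∑ m ∈ Icc r' n, (2*n+1).choose (2*m) * ((2*m+1).choose (2*r')) : ℕ) : Polynomial ℤ) * X^(2*r'))).coeff (2*r)
        = 4 * (∑ r' ∈ range (n+1),
          ((∑ m ∈ Icc r' n, (2*n+1).choose (2*m) * ((2*m+1).choose (2*r')) : ℕ) : Polynomial ℤ) * X^(2*r')).coeff (2*r) := by
      rw [← h4C, Polynomial.coeff_C_mul]
    rw [hx, h4, add_zero, Polynomial.finset_sum_coeff]
    congr 1
    rw [Finset.sum_eq_single r]
    · rw [← Polynomial.C_eq_natCast, Polynomial.coeff_C_mul, Polynomial.coeff_X_pow, if_pos rfl, mul_one]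
    · intro b _ hb
      rw [← Polynomial.C_eq_natCast, Polynomial.coeff_C_mul, Polynomial.coeff_X_pow,
        if_neg (by omega), mul_zero]
    · intro habs
      exact absurd (Finset.mem_range.mpr (by omega)) habs
  have hz : (4:ℤ) * ((∑ m ∈ Icc r n, (2*n+1).choose (2*m) * ((2*m+1).choose (2*r)) : ℕ) : ℤ)
      = 4 * ((4^(n-r) * ((2*n+1).choose (2*r) + 2 * (2*n+1).choose (2*r-1)) : ℕ) : ℤ) := by
    rw [← hRHS]
    have hcc : ((X+1) * (X+2)^(2*n+1) + (1-X) * (2-X)^(2*n+1) : Polynomial ℤ).coeff (2*r)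
        = ((4 * (∑ r' ∈ range (n+1),
            ((∑ m ∈ Icc r' n, (2*n+1).choose (2*m) * ((2*m+1).choose (2*r')) : ℕ) : Polynomial ℤ) * X^(2*r'))
            + 2 * X^(2*n+2)) : Polynomial ℤ).coeff (2*r) := by
      rw [P_poly n]
    rw [← hcc, Polynomial.coeff_add, hcoeffA, hcoeffB]
    obtain ⟨s, hs⟩ : ∃ s, n - r = s := ⟨n-r, rfl⟩
    rw [hs, show 2*n+1-2*r = 2*s+1 by omega, show 2*n+2-2*r = 2*s+2 by omega]
    have p1 : (2:ℤ)^(2*s+1) = 2 * 4^s := by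
      rw [pow_succ, pow_mul]; norm_num; ring
    have p2 : (2:ℤ)^(2*s+2) = 4 * 4^s := by
      rw [show 2*s+2 = 2*(s+1) by ring, pow_mul]; norm_num [pow_succ]; ring
    rw [p1, p2]
    push_cast
    ring
  have := mul_left_cancel₀ (show (4:ℤ) ≠ 0 by norm_num) hz
  exact_mod_cast this

end Poly

lemma odd_sum (n : ℕ) : ∑ m ∈ range (n+1), ((2*n+1).choose (2*m+1) : ℚ) = (4:ℚ)^n := by
  have h := POW (1:ℚ) n
  simp only [one_pow, mul_one, one_mul] at h
  have e1 : ((1:ℚ)+1)^(2*n+1) - ((1:ℚ)-1)^(2*n+1) = 2 * 4^n := by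
    norm_num
    rw [pow_succ, pow_mul]
    norm_num [mul_comm]
  rw [e1] at h
  exact mul_left_cancel₀ (show (2:ℚ) ≠ 0 by norm_num) h

lemma A2_eq (n r : ℕ) (h1 : 1 ≤ r) (h2 : r ≤ n) :
    ∑ m ∈ range (n-r+1), (2*n+1).choose (2*m+1) * ((2*(n-m)+1).choose (2*r))
      = 4^(n-r) * ((2*n+1).choose (2*r) + 2 * (2*n+1).choose (2*r-1)) := by
  rw [← AA_val n r h1 h2]
  have hrefl := Finset.sum_range_reflect
    (fun m => (2*n+1).choose (2*m+1) * ((2*(n-m)+1).choose (2*r))) (n-r+1)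
  simp only [Nat.add_sub_cancel] at hrefl
  rw [← hrefl]
  have hIcc : ∑ m ∈ Icc r n, (2*n+1).choose (2*m) * ((2*m+1).choose (2*r))
      = ∑ j ∈ range (n-r+1), (2*n+1).choose (2*(r+j)) * ((2*(r+j)+1).choose (2*r)) := by
    have h : Icc r n = Ico r (n+1) := by rw [Finset.Ico_add_one_right_eq_Icc]
    rw [h, Finset.sum_Ico_eq_sum_range]
    apply Finset.sum_congr (by congr 1; omega) (fun j _ => rfl)
  rw [hIcc]
  apply Finset.sum_congr rfl
  intro j hj
  have hj' : j ≤ n - r := by simpa using Nat.lt_succ_iff.mp (Finset.mem_range.mp hj)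
  have e1 : 2*(n - r - j)+1 = 2*n+1 - 2*(r+j) := by omega
  have e2 : n - (n - r - j) = r + j := by omega
  rw [e1, e2, Nat.choose_symm (by omega)]

theorem evenP : ∀ k : ℕ, ∃ c : ℕ → ℤ, c 0 = 1 ∧ ∀ n, Dneg n (2*(k+1)) = 4^n * ((c n : ℤ) : ℚ) := by
  have base : ∃ c : ℕ → ℤ, ∀ n, Dneg n (2*0+1)
      = 1 + ∑ r ∈ Icc 1 n, ((2*n+1).choose (2*r) : ℚ) * 4^r * ((c r : ℤ) : ℚ) := by
    refine ⟨fun _ => 0, fun n => ?_⟩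
    simp [Dneg_one n]
  have stepEven : ∀ k : ℕ, (∃ c : ℕ → ℤ, ∀ n, Dneg n (2*k+1)
        = 1 + ∑ r ∈ Icc 1 n, ((2*n+1).choose (2*r) : ℚ) * 4^r * ((c r : ℤ) : ℚ)) →
      ∃ c : ℕ → ℤ, c 0 = 1 ∧ ∀ n, Dneg n (2*(k+1)) = 4^n * ((c n : ℤ) : ℚ) := by
    rintro k ⟨c, hc⟩
    refine ⟨fun n => 1 + ∑ r ∈ Icc 1 n,
      (((2*n+1).choose (2*r) : ℤ) + 2 * ((2*n+1).choose (2*r-1) : ℤ)) * c r, by simp, fun n => ?_⟩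
    rw [show 2*(k+1) = (2*k+1)+1 by ring, Dneg_rec n (2*k+1) (by omega)]
    have expand : ∀ m ∈ range (n+1), ((2*n+1).choose (2*m+1) : ℚ) * Dneg (n-m) (2*k+1)
        = ((2*n+1).choose (2*m+1) : ℚ)
          + ∑ r ∈ Icc 1 (n-m), ((2*n+1).choose (2*m+1) : ℚ) *
              (((2*(n-m)+1).choose (2*r) : ℚ) * 4^r * ((c r : ℤ) : ℚ)) := by
      intro m _
      rw [hc (n-m), mul_add, mul_one, Finset.mul_sum]
    rw [Finset.sum_congr rfl expand, Finset.sum_add_distrib, odd_sum]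
    have swap : ∑ m ∈ range (n+1), ∑ r ∈ Icc 1 (n-m), ((2*n+1).choose (2*m+1) : ℚ) *
          (((2*(n-m)+1).choose (2*r) : ℚ) * 4^r * ((c r : ℤ) : ℚ))
        = ∑ r ∈ Icc 1 n, ∑ m ∈ range (n-r+1), ((2*n+1).choose (2*m+1) : ℚ) *
          (((2*(n-m)+1).choose (2*r) : ℚ) * 4^r * ((c r : ℤ) : ℚ)) := by
      apply Finset.sum_comm' (t' := Icc 1 n) (s' := fun r => range (n-r+1))
      intro m r
      simp only [Finset.mem_range, Finset.mem_Icc]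
      omega
    rw [swap]
    have inner : ∀ r ∈ Icc 1 n, ∑ m ∈ range (n-r+1), ((2*n+1).choose (2*m+1) : ℚ) *
          (((2*(n-m)+1).choose (2*r) : ℚ) * 4^r * ((c r : ℤ) : ℚ))
        = 4^n * ((((2*n+1).choose (2*r) : ℤ) + 2 * ((2*n+1).choose (2*r-1) : ℤ)) * c r : ℤ) := by
      intro r hr
      simp only [Finset.mem_Icc] at hr
      have hA := A2_eq n r hr.1 hr.2
      have hsum : ∑ m ∈ range (n-r+1), ((2*n+1).choose (2*m+1) : ℚ) *
            (((2*(n-m)+1).choose (2*r) : ℚ) * 4^r * ((c r : ℤ) : ℚ))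
          = ((∑ m ∈ range (n-r+1), (2*n+1).choose (2*m+1) * ((2*(n-m)+1).choose (2*r)) : ℕ) : ℚ)
              * 4^r * ((c r : ℤ) : ℚ) := by
        push_cast
        rw [Finset.sum_mul, Finset.sum_mul]
        apply Finset.sum_congr rfl; intro m _; ring
      rw [hsum, hA]
      push_cast
      have h4 : (4:ℚ)^(n-r) * 4^r = 4^n := by
        rw [← pow_add]
        congr 1
        omega
      linear_combination (((2*n+1).choose (2*r) : ℚ) + 2*((2*n+1).choose (2*r-1) : ℚ))
        * ((c r : ℤ) : ℚ) * h4
    rw [Finset.sum_congr rfl inner, ← Finset.mul_sum]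
    push_cast
    ring
  have stepOdd : ∀ k : ℕ, (∃ c : ℕ → ℤ, c 0 = 1 ∧ ∀ n, Dneg n (2*(k+1)) = 4^n * ((c n : ℤ) : ℚ)) →
      ∃ c : ℕ → ℤ, ∀ n, Dneg n (2*(k+1)+1)
        = 1 + ∑ r ∈ Icc 1 n, ((2*n+1).choose (2*r) : ℚ) * 4^r * ((c r : ℤ) : ℚ) := by
    rintro k ⟨c, hc0, hc⟩
    refine ⟨c, fun n => ?_⟩
    rw [Dneg_rec n (2*(k+1)) (by omega)]
    have expand : ∀ m ∈ range (n+1), ((2*n+1).choose (2*m+1) : ℚ) * Dneg (n-m) (2*(k+1))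
        = ((2*n+1).choose (2*m+1) : ℚ) * (4^(n-m) * ((c (n-m) : ℤ) : ℚ)) := by
      intro m _; rw [hc (n-m)]
    rw [Finset.sum_congr rfl expand]
    have hrefl := Finset.sum_range_reflect
      (fun m => ((2*n+1).choose (2*m+1) : ℚ) * (4^(n-m) * ((c (n-m) : ℤ) : ℚ))) (n+1)
    simp only [Nat.add_sub_cancel] at hrefl
    rw [← hrefl]
    have congr1 : ∀ j ∈ range (n+1),
        ((2*n+1).choose (2*(n-j)+1) : ℚ) * (4^(n-(n-j)) * ((c (n-(n-j)) : ℤ) : ℚ))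
          = ((2*n+1).choose (2*j) : ℚ) * 4^j * ((c j : ℤ) : ℚ) := by
      intro j hj
      have hj' : j ≤ n := by simpa using Nat.lt_succ_iff.mp (Finset.mem_range.mp hj)
      have e1 : 2*(n-j)+1 = 2*n+1 - 2*j := by omega
      have e2 : n - (n-j) = j := by omega
      rw [e1, e2, Nat.choose_symm (by omega), mul_assoc]
    rw [Finset.sum_congr rfl congr1]
    rw [Finset.sum_range_succ' (fun j => ((2*n+1).choose (2*j) : ℚ) * 4^j * ((c j : ℤ) : ℚ)) n]
    rw [sum_Icc_one]
    simp [hc0, add_comm]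
  intro k
  induction k with
  | zero => exact stepEven 0 base
  | succ k ih => exact stepEven (k+1) (stepOdd k ih)


theorem stmt12 (n k : ℕ) (hn : 0 < n) (hk : 0 < k) :
    ∃ c : ℤ, Dneg n (2 * k) = 2 ^ (2 * n) * c := by
  obtain ⟨k', rfl⟩ : ∃ k', k = k'+1 := ⟨k-1, by omega⟩
  obtain ⟨c, hc0, hc⟩ := evenP k'
  refine ⟨c n, ?_⟩
  rw [hc n]
  congr 1
  rw [pow_mul]
  norm_num
end

section
/- For all nonnegative integers n, the tangent numbers satisfy (-1)^n * T_{2n+1} = sum_{j=0}^{2n} (-1)^j * 2^{2n-j} * (j+1)! * S(2n+1, j+1), where S denotes the Stirling numbers of the second kind. -/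
/-- The tangent numbers `T_{2n+1}`, defined by `tan t = ∑_{n≥0} T_{2n+1} t^{2n+1}/(2n+1)!`,
i.e. as the Taylor coefficient `T_m = (d/dt)^m tan t |_{t=0}`. -/
noncomputable def tangentNumber (m : ℕ) : ℝ := iteratedDeriv m Real.tan 0

open Polynomial Finset

theorem stirling2_eq_zero_of_lt : ∀ {n j : ℕ}, n < j → stirling2 n j = 0
  | 0, _ + 1, _ => rfl
  | n + 1, j + 1, h => by
    rw [stirling2, stirling2_eq_zero_of_lt (by omega : n < j),
      stirling2_eq_zero_of_lt (by omega : n < j + 1)]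
    rfl

def tanhCoeff (m j : ℕ) : ℤ :=
  (-1) ^ (j + 1) * 2 ^ (m + 1 - j) * (j.factorial * stirling2 (m + 1) j : ℕ)

theorem tanhCoeff_succ (m j : ℕ) :
    tanhCoeff (m + 1) j = j * (2 * tanhCoeff m j - tanhCoeff m (j - 1)) := by
  rcases j with _ | k
  · simp [tanhCoeff, stirling2]
  have hS : stirling2 (m + 2) (k + 1) =
      stirling2 (m + 1) k + (k + 1) * stirling2 (m + 1) (k + 1) := rfl
  rcases le_or_gt k m with hk | hk
  · obtain ⟨d, rfl⟩ := Nat.exists_eq_add_of_le hk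
    simp only [tanhCoeff, hS, Nat.factorial_succ, Nat.add_sub_cancel,
      show k + d + 1 + 1 - (k + 1) = d + 1 by omega, show k + d + 1 - (k + 1) = d by omega,
      show k + d + 1 - k = d + 1 by omega]
    push_cast
    ring
  · simp only [tanhCoeff, hS, stirling2_eq_zero_of_lt (by omega : m + 1 < k + 1),
      Nat.factorial_succ, Nat.add_sub_cancel, show m + 1 + 1 - (k + 1) = m + 1 - k by omega]
    push_cast
    ring

section DerivPoly

variable {R S : Type*} [CommRing R] [CommRing S]

noncomputable def derivPoly (c : R) : ℕ → R[X]
  | 0 => X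
  | m + 1 => (1 + C c * X ^ 2) * derivative (derivPoly c m)

theorem map_derivPoly (f : R →+* S) (c : R) (m : ℕ) :
    (derivPoly c m).map f = derivPoly (f c) m := by
  induction m with
  | zero => simp [derivPoly]
  | succ m ih => simp [derivPoly, ← ih, Polynomial.map_mul, derivative_map]

theorem map_eval_zero_derivPoly (f : R →+* S) (c : R) (m : ℕ) :
    f ((derivPoly c m).eval 0) = (derivPoly (f c) m).eval 0 := by
  rw [← eval_zero_map, map_derivPoly]

theorem C_pow_mul_derivPoly_comp (c a : R) (m : ℕ) :
    C (a ^ m) * (derivPoly c m).comp (C a * X) = C a * derivPoly (c * a ^ 2) m := by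
  induction m with
  | zero => simp [derivPoly]
  | succ m ih =>
    have h := congrArg derivative ih
    rw [derivative_C_mul, derivative_C_mul, derivative_comp, derivative_C_mul_X] at h
    rw [derivPoly, derivPoly, mul_left_comm (C a), ← h]
    simp only [mul_comp, add_comp, one_comp, C_comp, pow_comp, X_comp, map_mul, map_pow]
    ring

theorem eval_zero_derivPoly_neg_one (n : ℕ) :
    (derivPoly (-1 : R) (2 * n + 1)).eval 0 = (-1) ^ n * (derivPoly 1 (2 * n + 1)).eval 0 := by
  -- over `ℤ`, which embeds into `ℂ`, where `i² = -1`
  suffices h : (derivPoly (-1 : ℤ) (2 * n + 1)).eval 0 =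
      (-1) ^ n * (derivPoly 1 (2 * n + 1)).eval 0 by
    have h' := congrArg (Int.castRingHom R) h
    rwa [map_mul, map_eval_zero_derivPoly, map_eval_zero_derivPoly, map_pow, map_neg,
      map_one] at h'
  apply (Int.castRingHom ℂ).injective_int
  rw [map_mul, map_eval_zero_derivPoly, map_eval_zero_derivPoly, map_pow, map_neg, map_one]
  have h := congrArg (eval 0) (C_pow_mul_derivPoly_comp (1 : ℂ) Complex.I (2 * n + 1))
  simp only [eval_mul, eval_C, eval_comp, eval_X, mul_zero, one_mul, Complex.I_sq] at h
  rw [pow_succ, pow_mul, Complex.I_sq, mul_comm _ Complex.I, mul_assoc] at h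
  exact (mul_left_cancel₀ Complex.I_ne_zero h).symm

theorem one_sub_X_sq_mul_derivative_pow_mul (j : ℕ) :
    (1 - X ^ 2) * derivative ((1 + X) ^ j * (1 - X) : R[X]) =
      (2 * j : R[X]) * ((1 + X) ^ j * (1 - X)) -
        (j + 1 : R[X]) * ((1 + X) ^ (j + 1) * (1 - X)) := by
  cases j with
  | zero => simp; ring
  | succ j =>
    simp only [derivative_mul, derivative_pow, derivative_add, derivative_sub, derivative_one,
      derivative_X, Nat.add_sub_cancel, C_eq_natCast]
    push_cast
    ring

theorem one_sub_X_sq_mul_derivative_sum (a : ℕ → R) {N : ℕ} (ha : a N = 0) :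
    (1 - X ^ 2) * derivative (∑ j ∈ range N, C (a j) * (1 + X) ^ j * (1 - X)) =
      ∑ j ∈ range (N + 1), C (j * (2 * a j - a (j - 1))) * (1 + X) ^ j * (1 - X) := by
  have hterm (j : ℕ) : (1 - X ^ 2) * derivative (C (a j) * (1 + X) ^ j * (1 - X)) =
      C (2 * j * a j) * (1 + X) ^ j * (1 - X) -
        C ((j + 1) * a (j + 1 - 1)) * (1 + X) ^ (j + 1) * (1 - X) := by
    rw [mul_assoc, derivative_C_mul, mul_left_comm, one_sub_X_sq_mul_derivative_pow_mul]
    simp only [map_mul, map_add, map_natCast, map_ofNat, map_one, Nat.add_sub_cancel]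
    ring
  have hsplit (j : ℕ) : C (j * (2 * a j - a (j - 1))) * (1 + X) ^ j * (1 - X) =
      C (2 * j * a j) * (1 + X) ^ j * (1 - X) - C (j * a (j - 1)) * (1 + X) ^ j * (1 - X) := by
    rw [← sub_mul, ← sub_mul, ← map_sub]
    ring_nf
  rw [map_sum, mul_sum, sum_congr rfl fun j _ => hterm j, sum_congr rfl fun j _ => hsplit j,
    sum_sub_distrib, sum_sub_distrib, sum_range_succ _ N, sum_range_succ' _ N]
  simp [ha]

theorem derivPoly_neg_one_succ (m : ℕ) :
    derivPoly (-1 : R) (m + 1) =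
      ∑ j ∈ range (m + 2), C (tanhCoeff m j : R) * (1 + X) ^ j * (1 - X) := by
  induction m with
  | zero =>
    simp [derivPoly, sum_range_succ, tanhCoeff, stirling2]
    ring
  | succ m ih =>
    have hvanish : (tanhCoeff m (m + 2) : R) = 0 := by
      simp [tanhCoeff, stirling2_eq_zero_of_lt (by omega : m + 1 < m + 2)]
    rw [derivPoly, ih, map_neg, map_one, neg_one_mul, ← sub_eq_add_neg,
      one_sub_X_sq_mul_derivative_sum _ hvanish]
    refine sum_congr rfl fun j _ => ?_
    rw [tanhCoeff_succ]
    push_cast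
    rfl

end DerivPoly

theorem iteratedDeriv_eqOn_eval_derivPoly {𝕜 : Type*} [NontriviallyNormedField 𝕜]
    {y : 𝕜 → 𝕜} {c : 𝕜} {U : Set 𝕜} (hU : IsOpen U)
    (hy : ∀ x ∈ U, HasDerivAt y (1 + c * y x ^ 2) x) (m : ℕ) :
    Set.EqOn (iteratedDeriv m y) (fun x => (derivPoly c m).eval (y x)) U := by
  induction m with
  | zero => intro x _; simp [derivPoly]
  | succ m ih =>
    intro x hx
    have hd : HasDerivAt (fun z => (derivPoly c m).eval (y z))
        ((derivative (derivPoly c m)).eval (y x) * (1 + c * y x ^ 2)) x :=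
      (Polynomial.hasDerivAt _ _).comp x (hy x hx)
    rw [iteratedDeriv_succ, (ih.eventuallyEq_of_mem (hU.mem_nhds hx)).deriv_eq, hd.deriv]
    simp [derivPoly]
    ring

theorem tangentNumber_eq_eval_derivPoly (m : ℕ) :
    tangentNumber m = (derivPoly (1 : ℝ) m).eval 0 := by
  have htan (x : ℝ) (hx : x ∈ {x | Real.cos x ≠ 0}) :
      HasDerivAt Real.tan (1 + 1 * Real.tan x ^ 2) x := by
    convert Real.hasDerivAt_tan hx using 1
    rw [← Real.inv_one_add_tan_sq hx, one_div, inv_inv, one_mul]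
  simpa [tangentNumber] using iteratedDeriv_eqOn_eval_derivPoly
    (isOpen_ne_fun Real.continuous_cos continuous_const) htan m (by simp : (0 : ℝ) ∈ _)

theorem stmt17 (n : ℕ) :
    (-1 : ℝ) ^ n * tangentNumber (2 * n + 1) =
      ∑ j ∈ Finset.range (2 * n + 1),
        (-1 : ℝ) ^ j * 2 ^ (2 * n - j) * (Nat.factorial (j + 1) : ℝ) *
          (stirling2 (2 * n + 1) (j + 1) : ℝ) := by
  calc (-1 : ℝ) ^ n * tangentNumber (2 * n + 1)
    _ = (derivPoly (-1 : ℝ) (2 * n + 1)).eval 0 := by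
      rw [tangentNumber_eq_eval_derivPoly, eval_zero_derivPoly_neg_one]
    _ = ∑ j ∈ range (2 * n + 2), (tanhCoeff (2 * n) j : ℝ) := by
      rw [derivPoly_neg_one_succ, eval_finsetSum]
      simp
    _ = _ := by
      have hzero : tanhCoeff (2 * n) 0 = 0 := by simp [tanhCoeff, stirling2]
      rw [sum_range_succ' _ (2 * n + 1), hzero, Int.cast_zero, add_zero]
      refine sum_congr rfl fun j _ => ?_
      simp only [tanhCoeff, Nat.add_sub_add_right]
      push_cast
      ring
end
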